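/- arXiv:1301.2441 — 8 statements merged into one kernel-verified Lean document; each statement's English description precedes it below -/
import Mathlib

section
/- Let f : ℝ^d → ℂ be a negative definite function and define f*(u) = sup_{|x| ≤ u} Re f(x). Then for all s, r > 0: (1/2)·(s²/(s²+1))·f*(r) ≤ f*(s·r) ≤ 2(1+s²)·f*(r). -/
/-!
With `g x = Re f x - Re f 0`, conditional negative definiteness on the points `0, x, -y` says that
the quadratic form `a² g x + a b (g x + g y - g (x + y)) + b² g y` is nonnegative. Its discriminant
shows that `√g` is subadditive, hence `g (n • x) ≤ n² g x`. Every point of norm at most `s r` is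
`n • z` with `‖z‖ ≤ r` and `n = ⌈s⌉₊`, so, as `Re f 0 ≥ 0`,
`f*(s r) ≤ ⌈s⌉₊² f*(r) ≤ 2 (1 + s²) f*(r)`.
The lower bound is the same estimate for the factor `s⁻¹` at radius `s r`.
-/

open Set Complex

section CondNegDef

variable {E : Type*} [AddCommGroup E]

def IsCondNegDef (f : E → ℂ) : Prop :=
  ∀ (n : ℕ) (x : Fin n → E) (c : Fin n → ℂ), ∑ j, c j = 0 →
    (∑ j, ∑ k, f (x j - x k) * c j * starRingEnd ℂ (c k)).re ≤ 0

def reDev (f : E → ℂ) (x : E) : ℝ := (f x).re - (f 0).re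

variable {f : E → ℂ}

lemma reDev_zero : reDev f 0 = 0 := sub_self _

lemma re_apply_neg (hsymm : ∀ x, f (-x) = starRingEnd ℂ (f x)) (x : E) :
    (f (-x)).re = (f x).re := by
  rw [hsymm, conj_re]

lemma reDev_quadratic_nonneg (hf : IsCondNegDef f) (hsymm : ∀ x, f (-x) = starRingEnd ℂ (f x))
    (x y : E) (a b : ℝ) :
    0 ≤ reDev f x * (a * a) + (reDev f x + reDev f y - reDev f (x + y)) * (a * b) +
      reDev f y * (b * b) := by
  have h := hf 3 ![0, x, -y] ![-((a : ℂ) + b), a, b] (by simp [Fin.sum_univ_three])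
  have hx := re_apply_neg hsymm x
  have hy := re_apply_neg hsymm y
  have hxy := re_apply_neg hsymm (x + y)
  simp only [Fin.sum_univ_three, Matrix.cons_val_zero, Matrix.cons_val_one,
    Matrix.cons_val_two, Matrix.head_cons, Matrix.tail_cons, sub_self, zero_sub, sub_zero,
    sub_neg_eq_add, neg_sub_left, zero_add, neg_add_cancel, map_neg, map_add, conj_ofReal, add_re,
    mul_re, mul_im, neg_re, neg_im, add_im, ofReal_re, ofReal_im, hx, hy, hxy] at h
  simp only [reDev]
  linarith

lemma reDev_nonneg (hf : IsCondNegDef f) (hsymm : ∀ x, f (-x) = starRingEnd ℂ (f x)) (x : E) :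
    0 ≤ reDev f x := by
  simpa using reDev_quadratic_nonneg hf hsymm x 0 1 0

lemma abs_reDev_add_sub_le (hf : IsCondNegDef f) (hsymm : ∀ x, f (-x) = starRingEnd ℂ (f x))
    (x y : E) :
    |reDev f x + reDev f y - reDev f (x + y)| ≤ 2 * √(reDev f x) * √(reDev f y) := by
  have h := discrim_le_zero fun t => by
    simpa using reDev_quadratic_nonneg hf hsymm x y t 1
  rw [discrim, sub_nonpos] at h
  calc |reDev f x + reDev f y - reDev f (x + y)| ≤ √(2 ^ 2 * (reDev f x * reDev f y)) :=
        Real.abs_le_sqrt (by linarith)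
    _ = 2 * √(reDev f x) * √(reDev f y) := by
        rw [Real.sqrt_mul (by positivity), Real.sqrt_sq zero_le_two,
          Real.sqrt_mul (reDev_nonneg hf hsymm x), mul_assoc]

lemma sqrt_reDev_add_le (hf : IsCondNegDef f) (hsymm : ∀ x, f (-x) = starRingEnd ℂ (f x))
    (x y : E) : √(reDev f (x + y)) ≤ √(reDev f x) + √(reDev f y) := by
  rw [Real.sqrt_le_left (by positivity), add_sq, Real.sq_sqrt (reDev_nonneg hf hsymm x),
    Real.sq_sqrt (reDev_nonneg hf hsymm y)]
  linarith [neg_le_abs (reDev f x + reDev f y - reDev f (x + y)),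
    abs_reDev_add_sub_le hf hsymm x y]

lemma sqrt_reDev_nsmul_le (hf : IsCondNegDef f) (hsymm : ∀ x, f (-x) = starRingEnd ℂ (f x))
    (n : ℕ) (x : E) : √(reDev f (n • x)) ≤ n * √(reDev f x) := by
  induction n with
  | zero => simp [reDev_zero]
  | succ n ih =>
    rw [succ_nsmul, Nat.cast_succ, add_one_mul]
    exact (sqrt_reDev_add_le hf hsymm _ _).trans (by gcongr)

lemma reDev_nsmul_le (hf : IsCondNegDef f) (hsymm : ∀ x, f (-x) = starRingEnd ℂ (f x))
    (n : ℕ) (x : E) : reDev f (n • x) ≤ n ^ 2 * reDev f x := by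
  have h := sqrt_reDev_nsmul_le hf hsymm n x
  rw [Real.sqrt_le_left (by positivity), mul_pow, Real.sq_sqrt (reDev_nonneg hf hsymm x)] at h
  exact h

end CondNegDef

section Scaling

variable {E : Type*} [NormedAddCommGroup E] {f : E → ℂ}

noncomputable def reSup (f : E → ℂ) (u : ℝ) : ℝ := sSup ((fun x => (f x).re) '' {x | ‖x‖ ≤ u})

lemma reSup_nonneg (h0 : 0 ≤ (f 0).re) {u : ℝ} (hu : 0 ≤ u) : 0 ≤ reSup f u := by
  by_cases hB : BddAbove ((fun x => (f x).re) '' {x | ‖x‖ ≤ u})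
  · exact h0.trans (le_csSup hB ⟨0, by simpa using hu, rfl⟩)
  · rw [reSup, Real.sSup_of_not_bddAbove hB]

variable [NormedSpace ℝ E]

lemma re_le_sq_mul_of_forall_re_le (hf : IsCondNegDef f)
    (hsymm : ∀ x, f (-x) = starRingEnd ℂ (f x)) (h0 : 0 ≤ (f 0).re) {r M : ℝ}
    (hM : ∀ x, ‖x‖ ≤ r → (f x).re ≤ M) {n : ℕ} (hn : 0 < n) {x : E} (hx : ‖x‖ ≤ n * r) :
    (f x).re ≤ n ^ 2 * M := by
  have hn' : (0 : ℝ) < n := Nat.cast_pos.mpr hn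
  set z := (n : ℝ)⁻¹ • x
  have hxz : x = n • z := by rw [← Nat.cast_smul_eq_nsmul ℝ, smul_inv_smul₀ hn'.ne']
  have hz : ‖z‖ ≤ r := by
    rw [norm_smul, norm_inv, Real.norm_natCast, inv_mul_le_iff₀ hn']
    exact hx
  have hdev := reDev_nsmul_le hf hsymm n z
  rw [← hxz] at hdev
  have hn1 : (1 : ℝ) ≤ n ^ 2 := one_le_pow₀ (Nat.one_le_cast.mpr hn)
  simp only [reDev] at hdev
  linarith [mul_le_mul_of_nonneg_left (hM z hz) (sq_nonneg (n : ℝ)),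
    mul_le_mul_of_nonneg_right hn1 h0]

lemma bddAbove_and_reSup_le (hf : IsCondNegDef f) (hsymm : ∀ x, f (-x) = starRingEnd ℂ (f x))
    (h0 : 0 ≤ (f 0).re) {r r' : ℝ} (hr' : 0 ≤ r') {n : ℕ} (hn : 0 < n) (hrr : r' ≤ n * r)
    (hB : BddAbove ((fun x => (f x).re) '' {x | ‖x‖ ≤ r})) :
    BddAbove ((fun x => (f x).re) '' {x | ‖x‖ ≤ r'}) ∧ reSup f r' ≤ n ^ 2 * reSup f r := by
  have hbound : ∀ y ∈ (fun x => (f x).re) '' {x | ‖x‖ ≤ r'}, y ≤ n ^ 2 * reSup f r := by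
    rintro _ ⟨x, hx, rfl⟩
    exact re_le_sq_mul_of_forall_re_le hf hsymm h0 (fun z hz => le_csSup hB ⟨z, hz, rfl⟩) hn
      (le_trans hx hrr)
  exact ⟨⟨_, hbound⟩, csSup_le ⟨_, 0, by simpa using hr', rfl⟩ hbound⟩

lemma sq_natCeil_le {t : ℝ} (ht : 0 ≤ t) : (⌈t⌉₊ : ℝ) ^ 2 ≤ 2 * (1 + t ^ 2) := by
  have h := Nat.ceil_lt_add_one ht
  nlinarith [sq_nonneg (t - 1), Nat.cast_nonneg (α := ℝ) ⌈t⌉₊]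

theorem reSup_mul_le (hf : IsCondNegDef f) (hsymm : ∀ x, f (-x) = starRingEnd ℂ (f x))
    (h0 : 0 ≤ (f 0).re) {t r : ℝ} (ht : 0 < t) (hr : 0 < r) :
    reSup f (t * r) ≤ 2 * (1 + t ^ 2) * reSup f r := by
  by_cases hB : BddAbove ((fun x => (f x).re) '' {x | ‖x‖ ≤ r})
  · have hle := (bddAbove_and_reSup_le hf hsymm h0 (mul_pos ht hr).le (Nat.ceil_pos.mpr ht)
      (mul_le_mul_of_nonneg_right (Nat.le_ceil t) hr.le) hB).2
    exact hle.trans (mul_le_mul_of_nonneg_right (sq_natCeil_le ht.le) (reSup_nonneg h0 hr.le))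
  · -- neither set is bounded above, so both suprema take the junk value `0`
    have hr_le : r ≤ ⌈t⁻¹⌉₊ * (t * r) :=
      calc r = t⁻¹ * (t * r) := (inv_mul_cancel_left₀ ht.ne' r).symm
        _ ≤ ⌈t⁻¹⌉₊ * (t * r) := by gcongr; exact Nat.le_ceil _
    have hB' : ¬ BddAbove ((fun x => (f x).re) '' {x | ‖x‖ ≤ t * r}) := fun hB' =>
      hB (bddAbove_and_reSup_le hf hsymm h0 hr.le (Nat.ceil_pos.mpr (inv_pos.mpr ht)) hr_le hB').1
    rw [reSup, reSup, Real.sSup_of_not_bddAbove hB, Real.sSup_of_not_bddAbove hB', mul_zero]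

end Scaling

/-- Scaling property of `f*` for a negative definite function `f`. -/
theorem stmt_0 {d : ℕ} (f : EuclideanSpace ℝ (Fin d) → ℂ)
    (hf0 : 0 ≤ (f 0).re ∧ (f 0).im = 0)
    (hsymm : ∀ x, f (-x) = starRingEnd ℂ (f x))
    (hneg : ∀ (n : ℕ) (x : Fin n → EuclideanSpace ℝ (Fin d)) (c : Fin n → ℂ),
      (∑ j, c j) = 0 →
      (∑ j, ∑ k, f (x j - x k) * c j * starRingEnd ℂ (c k)).re ≤ 0)
    (fstar : ℝ → ℝ)
    (hfstar : ∀ u, fstar u = sSup ((fun x => (f x).re) '' {x | ‖x‖ ≤ u})) :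
    ∀ s r : ℝ, 0 < s → 0 < r →
      (1 / 2) * (s ^ 2 / (s ^ 2 + 1)) * fstar r ≤ fstar (s * r) ∧
      fstar (s * r) ≤ 2 * (1 + s ^ 2) * fstar r := by
  intro s r hs hr
  obtain rfl : fstar = reSup f := funext hfstar
  refine ⟨?_, reSup_mul_le hneg hsymm hf0.1 hs hr⟩
  have h := reSup_mul_le hneg hsymm hf0.1 (inv_pos.mpr hs) (mul_pos hs hr)
  rw [inv_mul_cancel_left₀ hs.ne'] at h
  calc 1 / 2 * (s ^ 2 / (s ^ 2 + 1)) * reSup f r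
      ≤ 1 / 2 * (s ^ 2 / (s ^ 2 + 1)) * (2 * (1 + s⁻¹ ^ 2) * reSup f (s * r)) := by gcongr
    _ = reSup f (s * r) := by field_simp
end

section
/- Let f : ℝ^d → [0,∞) with f(0) = 0 and set f̃(u) = sup_{|x| = u} f(x), f*(u) = sup_{|x| ≤ u} f(x). Suppose f̃ is positive on (0,∞) and f satisfies the weak lower scaling condition WLSC(β, θ, C), i.e. f(λx) ≥ C λ^β f(x) for all λ ≥ 1 and |x| ≥ θ > 0. Then f* satisfies WLSC(β, θ, C²·f̃(θ)/f*(θ)), i.e. f*(λu) ≥ C²·(f̃(θ)/f*(θ))·λ^β·f*(u) for all λ ≥ 1 and u ≥ θ. -/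
/-!
For `θ ≤ ‖x‖ ≤ u` the bound follows by scaling `f` itself, because `C · f̃(θ)/f*(θ) ≤ C ≤ 1`.
For `‖x‖ < θ` one uses `f(x) ≤ f*(θ)` and scales the sphere of radius `θ` instead, which gives
`C λ^β f̃(θ) ≤ f*(λu)`. The suprema are genuine (`sSup` of an unbounded set of reals is `0`)
because the same scaling pushes `θ < ‖x‖ ≤ R` onto the sphere of radius `R`, on which `f` is
bounded since `f̃(R) > 0`.
-/

open Set

/-- WLSC(β, θ, C) in the paper's notation. -/
def WeakLowerScaling {E : Type*} [NormedAddCommGroup E] [NormedSpace ℝ E]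
    (f : E → ℝ) (β θ C : ℝ) : Prop :=
  ∀ lam : ℝ, 1 ≤ lam → ∀ x : E, θ ≤ ‖x‖ → C * lam ^ β * f x ≤ f (lam • x)

namespace Real

lemma bddAbove_of_sSup_pos {s : Set ℝ} (hs : 0 < sSup s) : BddAbove s := by
  by_contra h
  exact hs.ne' (sSup_of_not_bddAbove h)

lemma exists_pos_of_sSup_pos {s : Set ℝ} (hs : 0 < sSup s) : ∃ x ∈ s, 0 < x := by
  obtain rfl | hne := s.eq_empty_or_nonempty
  · exact absurd hs (by simp)
  exact exists_lt_of_lt_csSup hne hs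

lemma mul_sSup_le {s : Set ℝ} {a b : ℝ} (ha : 0 ≤ a) (hb : 0 ≤ b) (h : ∀ x ∈ s, a * x ≤ b) :
    a * sSup s ≤ b := by
  rw [← smul_eq_mul, ← sSup_smul_of_nonneg ha]
  refine Real.sSup_le ?_ hb
  rintro _ ⟨x, hx, rfl⟩
  exact h x hx

end Real

/-- `f̃` in the paper's notation. -/
noncomputable def sphereSup {E : Type*} [NormedAddCommGroup E] (f : E → ℝ) (u : ℝ) : ℝ :=
  sSup (f '' {x | ‖x‖ = u})

/-- `f*` in the paper's notation. -/
noncomputable def ballSup {E : Type*} [NormedAddCommGroup E] (f : E → ℝ) (u : ℝ) : ℝ :=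
  sSup (f '' {x | ‖x‖ ≤ u})

lemma sphereSup_nonneg {E : Type*} [NormedAddCommGroup E] {f : E → ℝ} (hf : ∀ x, 0 ≤ f x)
    (u : ℝ) : 0 ≤ sphereSup f u :=
  Real.sSup_nonneg (by rintro _ ⟨x, -, rfl⟩; exact hf x)

lemma ballSup_nonneg {E : Type*} [NormedAddCommGroup E] {f : E → ℝ} (hf : ∀ x, 0 ≤ f x)
    (u : ℝ) : 0 ≤ ballSup f u :=
  Real.sSup_nonneg (by rintro _ ⟨x, -, rfl⟩; exact hf x)

namespace WeakLowerScaling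

variable {E : Type*} [NormedAddCommGroup E] [NormedSpace ℝ E] {f : E → ℝ} {β θ C : ℝ}

lemma le_one (hw : WeakLowerScaling f β θ C) {x : E} (hx : θ ≤ ‖x‖) (hfx : 0 < f x) :
    C ≤ 1 := by
  have h := hw 1 le_rfl x hx
  rw [Real.one_rpow, mul_one, one_smul] at h
  exact (mul_le_iff_le_one_left hfx).mp h

lemma mul_le_apply_smul (hw : WeakLowerScaling f β θ C) (hβ : 0 ≤ β) (hC : 0 ≤ C)
    {x : E} (hx : θ ≤ ‖x‖) (hfx : 0 ≤ f x) {t : ℝ} (ht : 1 ≤ t) :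
    C * f x ≤ f (t • x) :=
  calc C * f x = C * 1 * f x := by rw [mul_one]
    _ ≤ C * t ^ β * f x := by gcongr; exact Real.one_le_rpow ht hβ
    _ ≤ f (t • x) := hw t ht x hx

lemma bddAbove_image_norm_le (hw : WeakLowerScaling f β θ C) (hβ : 0 ≤ β) (hC : 0 < C)
    (hf : ∀ x, 0 ≤ f x) (hθ : 0 ≤ θ) {R : ℝ}
    (hball : BddAbove (f '' {x | ‖x‖ ≤ θ})) (hsphere : BddAbove (f '' {x | ‖x‖ = R})) :
    BddAbove (f '' {x | ‖x‖ ≤ R}) := by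
  obtain ⟨M₀, hM₀⟩ := hball
  obtain ⟨M, hM⟩ := hsphere
  refine ⟨max M₀ (M / C), ?_⟩
  rintro _ ⟨x, hxR, rfl⟩
  rcases le_or_gt ‖x‖ θ with hxθ | hxθ
  · exact le_max_of_le_left (hM₀ ⟨x, hxθ, rfl⟩)
  have hx₀ : 0 < ‖x‖ := hθ.trans_lt hxθ
  have hnorm : ‖(R / ‖x‖) • x‖ = R := by
    rw [norm_smul, Real.norm_of_nonneg (div_nonneg (hx₀.le.trans hxR) hx₀.le),
      div_mul_cancel₀ _ hx₀.ne']
  have hscale := hw.mul_le_apply_smul hβ hC.le hxθ.le (hf x) ((one_le_div hx₀).mpr hxR)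
  refine le_max_of_le_right ((le_div_iff₀ hC).mpr ?_)
  linarith [hM ⟨_, hnorm, rfl⟩]

lemma mul_rpow_mul_le_sSup (hw : WeakLowerScaling f β θ C) {lam u : ℝ} (hlam : 1 ≤ lam)
    (hbdd : BddAbove (f '' {x | ‖x‖ ≤ lam * u})) {x : E} (hθx : θ ≤ ‖x‖) (hxu : ‖x‖ ≤ u) :
    C * lam ^ β * f x ≤ sSup (f '' {x | ‖x‖ ≤ lam * u}) := by
  have hlam₀ : 0 ≤ lam := zero_le_one.trans hlam
  refine (hw lam hlam x hθx).trans (le_csSup hbdd ⟨lam • x, ?_, rfl⟩)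
  change ‖lam • x‖ ≤ lam * u
  rw [norm_smul, Real.norm_of_nonneg hlam₀]
  gcongr

lemma mul_rpow_mul_sphereSup_le (hw : WeakLowerScaling f β θ C) (hf : ∀ x, 0 ≤ f x)
    (hC : 0 ≤ C) {lam u : ℝ} (hlam : 1 ≤ lam) (hu : θ ≤ u)
    (hball : BddAbove (f '' {x | ‖x‖ ≤ lam * u})) :
    C * lam ^ β * sphereSup f θ ≤ ballSup f (lam * u) := by
  have hlam₀ : 0 ≤ lam := zero_le_one.trans hlam
  refine Real.mul_sSup_le (by positivity) (ballSup_nonneg hf _) ?_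
  rintro _ ⟨x, hx, rfl⟩
  exact hw.mul_rpow_mul_le_sSup hlam hball hx.ge (hx.le.trans hu)

lemma sq_mul_div_mul_rpow_mul_ballSup_le (hw : WeakLowerScaling f β θ C) (hf : ∀ x, 0 ≤ f x)
    (hC : 0 ≤ C) (hC₁ : C ≤ 1) {lam u : ℝ} (hlam : 1 ≤ lam) (hu : θ ≤ u)
    (hθ : 0 < ballSup f θ) (hball : BddAbove (f '' {x | ‖x‖ ≤ lam * u})) :
    C ^ 2 * (sphereSup f θ / ballSup f θ) * lam ^ β * ballSup f u ≤ ballSup f (lam * u) := by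
  have hlam₀ : 0 ≤ lam := zero_le_one.trans hlam
  have hballθ := Real.bddAbove_of_sSup_pos hθ
  have hsphere₀ := sphereSup_nonneg hf θ
  have hratio : sphereSup f θ / ballSup f θ ≤ 1 := by
    refine div_le_one_of_le₀ (Real.sSup_le ?_ hθ.le) hθ.le
    rintro _ ⟨x, hx, rfl⟩
    exact le_csSup hballθ ⟨x, hx.le, rfl⟩
  refine Real.mul_sSup_le (by positivity) (ballSup_nonneg hf _) ?_
  rintro _ ⟨x, hxu, rfl⟩
  rcases le_or_gt θ ‖x‖ with hxθ | hxθ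
  · calc _ ≤ C * lam ^ β * f x := by
          gcongr
          · exact hf x
          · nlinarith
      _ ≤ _ := hw.mul_rpow_mul_le_sSup hlam hball hxθ hxu
  · have hfx : f x ≤ ballSup f θ := le_csSup hballθ ⟨x, hxθ.le, rfl⟩
    calc _ ≤ C ^ 2 * (sphereSup f θ / ballSup f θ) * lam ^ β * ballSup f θ := by gcongr
      _ = C * (C * lam ^ β * sphereSup f θ) := by field_simp
      _ ≤ 1 * (C * lam ^ β * sphereSup f θ) := by gcongr
      _ ≤ _ := by rw [one_mul]; exact hw.mul_rpow_mul_sphereSup_le hf hC hlam hu hball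

end WeakLowerScaling

theorem stmt_1_general {d : ℕ} (f : EuclideanSpace ℝ (Fin d) → ℝ)
    (hfnonneg : ∀ x, 0 ≤ f x)
    (ftilde fstar : ℝ → ℝ)
    (hftilde : ∀ u, ftilde u = sSup (f '' {x | ‖x‖ = u}))
    (hfstar : ∀ u, fstar u = sSup (f '' {x | ‖x‖ ≤ u}))
    (hpos : ∀ u : ℝ, 0 < u → 0 < ftilde u)
    (β θ C : ℝ) (hβ : 0 < β) (hθ : 0 < θ) (hC : 0 < C)
    (hwlsc : ∀ lam : ℝ, 1 ≤ lam → ∀ x : EuclideanSpace ℝ (Fin d), θ ≤ ‖x‖ →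
      C * lam ^ β * f x ≤ f (lam • x)) :
    ∀ lam : ℝ, 1 ≤ lam → ∀ u : ℝ, θ ≤ u →
      C ^ 2 * (ftilde θ / fstar θ) * lam ^ β * fstar u ≤ fstar (lam * u) := by
  intro lam hlam u hu
  obtain rfl : ftilde = sphereSup f := funext hftilde
  obtain rfl : fstar = ballSup f := funext hfstar
  have hw : WeakLowerScaling f β θ C := hwlsc
  obtain hθ₀ | hθpos := (ballSup_nonneg hfnonneg θ).eq_or_lt
  · rw [← hθ₀, div_zero, mul_zero, zero_mul, zero_mul]
    exact ballSup_nonneg hfnonneg _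
  obtain ⟨_, ⟨x₀, hx₀, rfl⟩, hfx₀⟩ := Real.exists_pos_of_sSup_pos (hpos θ hθ)
  have hball : BddAbove (f '' {x | ‖x‖ ≤ lam * u}) :=
    hw.bddAbove_image_norm_le hβ.le hC hfnonneg hθ.le (Real.bddAbove_of_sSup_pos hθpos)
      (Real.bddAbove_of_sSup_pos (hpos _ (by nlinarith)))
  exact hw.sq_mul_div_mul_rpow_mul_ballSup_le hfnonneg hC.le (hw.le_one hx₀.ge hfx₀) hlam hu
    hθpos hball

/-- Weak lower scaling passes from `f` to `f*`. -/
theorem stmt_1 {d : ℕ} (f : EuclideanSpace ℝ (Fin d) → ℝ)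
    (hfnonneg : ∀ x, 0 ≤ f x) (hf0 : f 0 = 0)
    (ftilde fstar : ℝ → ℝ)
    (hftilde : ∀ u, ftilde u = sSup (f '' {x | ‖x‖ = u}))
    (hfstar : ∀ u, fstar u = sSup (f '' {x | ‖x‖ ≤ u}))
    (hpos : ∀ u : ℝ, 0 < u → 0 < ftilde u)
    (β θ C : ℝ) (hβ : 0 < β) (hθ : 0 < θ) (hC : 0 < C)
    (hwlsc : ∀ lam : ℝ, 1 ≤ lam → ∀ x : EuclideanSpace ℝ (Fin d), θ ≤ ‖x‖ →
      C * lam ^ β * f x ≤ f (lam • x)) :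
    ∀ lam : ℝ, 1 ≤ lam → ∀ u : ℝ, θ ≤ u →
      C ^ 2 * (ftilde θ / fstar θ) * lam ^ β * fstar u ≤ fstar (lam * u) :=
  stmt_1_general f hfnonneg ftilde fstar hftilde hfstar hpos β θ C hβ hθ hC hwlsc
end

section
/- Let ν₁ : (0,∞) → [0,∞) be non-increasing with ∫₀^∞ min(1, z²) ν₁(z) dz < ∞, and define ψ̃₀(r) = 2∫₀^∞ (1 - cos(rz)) ν₁(z) dz for r > 0. Then ψ̃₀(r) ≥ (2/3)·∫_{5π/(3r)}^∞ ν₁(z) dz. -/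
/-!
Put `f z = 1 - cos (r z)` and `δ = 2π / (3r)`. Since the three angles `r z`, `r z - 2π/3`,
`r z - 4π/3` are equally spaced on the circle, `f z + f (z - δ) + f (z - 2δ) = 3`. Hence
`3 ∫_a^∞ ν₁ = ∑_{k < 3} ∫_a^∞ f (z - kδ) ν₁ z`, and since `ν₁` is non-increasing each term is
at most `∫_a^∞ f (z - kδ) ν₁ (z - kδ) dz ≤ ∫_0^∞ f ν₁` as soon as `a ≥ 2δ`.
So `∫_a^∞ ν₁ ≤ ∫_0^∞ f ν₁ = ψ(r) / 2`.
-/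

open Real MeasureTheory Set

theorem cos_add_cos_sub_two_pi_div_three_add_cos_sub_four_pi_div_three (θ : ℝ) :
    cos θ + cos (θ - 2 * π / 3) + cos (θ - 4 * π / 3) = 0 := by
  have hcos₂ : cos (2 * π / 3) = -(1 / 2) := by
    rw [show 2 * π / 3 = π - π / 3 by ring, cos_pi_sub, cos_pi_div_three]
  have hsin₂ : sin (2 * π / 3) = sin (π / 3) := by
    rw [show 2 * π / 3 = π - π / 3 by ring, sin_pi_sub]
  have hcos₄ : cos (4 * π / 3) = -(1 / 2) := by
    rw [show 4 * π / 3 = π / 3 + π by ring, cos_add_pi, cos_pi_div_three]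
  have hsin₄ : sin (4 * π / 3) = -sin (π / 3) := by
    rw [show 4 * π / 3 = π / 3 + π by ring, sin_add_pi]
  rw [cos_sub, cos_sub, hcos₂, hsin₂, hcos₄, hsin₄]
  ring

theorem one_sub_cos_le_max_mul_min (r z : ℝ) :
    1 - cos (r * z) ≤ max 2 (r ^ 2) * min 1 (z ^ 2) := by
  rcases le_total (z ^ 2) 1 with hz | hz
  · have := one_sub_sq_div_two_le_cos (x := r * z)
    rw [min_eq_right hz]
    nlinarith [le_max_right 2 (r ^ 2), sq_nonneg z, sq_nonneg (r * z)]
  · rw [min_eq_left hz, mul_one]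
    linarith [neg_one_le_cos (r * z), le_max_left 2 (r ^ 2)]

theorem setIntegral_Ioi_comp_sub (g : ℝ → ℝ) (a t : ℝ) :
    ∫ z in Ioi a, g (z - t) = ∫ z in Ioi (a - t), g z := by
  have hpre : (· - t) ⁻¹' Ioi (a - t) = Ioi a := by ext; simp
  rw [← hpre, (measurePreserving_sub_right volume t).setIntegral_preimage_emb
    (MeasurableEquiv.subRight t).measurableEmbedding]

theorem MeasureTheory.IntegrableOn.comp_sub_Ioi {g : ℝ → ℝ} {a t : ℝ}
    (hg : IntegrableOn g (Ioi (a - t))) :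
    IntegrableOn (fun z ↦ g (z - t)) (Ioi a) := by
  have hpre : (· - t) ⁻¹' Ioi (a - t) = Ioi a := by ext; simp
  rw [← hpre]
  exact ((measurePreserving_sub_right volume t).integrableOn_comp_preimage
    (MeasurableEquiv.subRight t).measurableEmbedding).mpr hg

section Antitone

variable {ν f : ℝ → ℝ}

theorem integrableOn_one_sub_cos_mul (hν : AntitoneOn ν (Ioi 0)) (hν₀ : ∀ z, 0 < z → 0 ≤ ν z)
    (hint : IntegrableOn (fun z ↦ min 1 (z ^ 2) * ν z) (Ioi 0)) (r : ℝ) :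
    IntegrableOn (fun z ↦ (1 - cos (r * z)) * ν z) (Ioi 0) := by
  refine (hint.const_mul (max 2 (r ^ 2))).mono' ?_ ?_
  · exact ((by fun_prop : Measurable fun z ↦ 1 - cos (r * z)).aemeasurable.mul
      (aemeasurable_restrict_of_antitoneOn measurableSet_Ioi hν)).aestronglyMeasurable
  · filter_upwards [ae_restrict_mem measurableSet_Ioi] with z hz
    have hνz := hν₀ z hz
    rw [norm_of_nonneg (mul_nonneg (by linarith [cos_le_one (r * z)]) hνz), ← mul_assoc]
    exact mul_le_mul_of_nonneg_right (one_sub_cos_le_max_mul_min r z) hνz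

theorem integrableOn_Ioi_comp_sub_mul (hν : AntitoneOn ν (Ioi 0)) (hν₀ : ∀ z, 0 < z → 0 ≤ ν z)
    (hf : Measurable f) (hf₀ : ∀ z, 0 ≤ f z) (hfν : IntegrableOn (fun z ↦ f z * ν z) (Ioi 0))
    {a t : ℝ} (ht : 0 ≤ t) (hta : t ≤ a) :
    IntegrableOn (fun z ↦ f (z - t) * ν z) (Ioi a) := by
  refine (hfν.mono_set (Ioi_subset_Ioi (sub_nonneg.mpr hta))).comp_sub_Ioi.mono' ?_ ?_
  · exact ((hf.comp (measurable_sub_const t)).aemeasurable.mul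
      ((aemeasurable_restrict_of_antitoneOn measurableSet_Ioi hν).mono_set
        (Ioi_subset_Ioi (ht.trans hta)))).aestronglyMeasurable
  · filter_upwards [ae_restrict_mem measurableSet_Ioi] with z (hz : a < z)
    have hzt : 0 < z - t := by linarith
    rw [norm_of_nonneg (mul_nonneg (hf₀ _) (hν₀ z (by linarith)))]
    exact mul_le_mul_of_nonneg_left (hν hzt (show 0 < z by linarith) (by linarith)) (hf₀ _)

theorem setIntegral_Ioi_comp_sub_mul_le (hν : AntitoneOn ν (Ioi 0))
    (hν₀ : ∀ z, 0 < z → 0 ≤ ν z) (hf : Measurable f) (hf₀ : ∀ z, 0 ≤ f z)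
    (hfν : IntegrableOn (fun z ↦ f z * ν z) (Ioi 0)) {a t : ℝ} (ht : 0 ≤ t) (hta : t ≤ a) :
    ∫ z in Ioi a, f (z - t) * ν z ≤ ∫ z in Ioi 0, f z * ν z := by
  have hsub : Ioi (a - t) ⊆ Ioi 0 := Ioi_subset_Ioi (sub_nonneg.mpr hta)
  calc ∫ z in Ioi a, f (z - t) * ν z
      ≤ ∫ z in Ioi a, f (z - t) * ν (z - t) := by
        refine setIntegral_mono_on (integrableOn_Ioi_comp_sub_mul hν hν₀ hf hf₀ hfν ht hta)
          (hfν.mono_set hsub).comp_sub_Ioi measurableSet_Ioi fun z (hz : a < z) ↦ ?_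
        have hzt : 0 < z - t := by linarith
        exact mul_le_mul_of_nonneg_left (hν hzt (show 0 < z by linarith) (by linarith)) (hf₀ _)
    _ = ∫ z in Ioi (a - t), f z * ν z := setIntegral_Ioi_comp_sub (fun z ↦ f z * ν z) a t
    _ ≤ ∫ z in Ioi 0, f z * ν z :=
        setIntegral_mono_set hfν
          (ae_restrict_of_forall_mem measurableSet_Ioi fun z hz ↦ mul_nonneg (hf₀ z) (hν₀ z hz))
          hsub.eventuallyLE

theorem setIntegral_Ioi_le_setIntegral_one_sub_cos_mul (hν : AntitoneOn ν (Ioi 0))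
    (hν₀ : ∀ z, 0 < z → 0 ≤ ν z) {r a : ℝ}
    (hint : IntegrableOn (fun z ↦ (1 - cos (r * z)) * ν z) (Ioi 0))
    (hr : 0 < r) (ha : 4 * π / (3 * r) ≤ a) :
    ∫ z in Ioi a, ν z ≤ ∫ z in Ioi 0, (1 - cos (r * z)) * ν z := by
  set f : ℝ → ℝ := fun z ↦ 1 - cos (r * z)
  set δ := 2 * π / (3 * r)
  have hδ : 0 ≤ δ := by positivity
  have h2δ : 2 * δ ≤ a := by convert ha using 1; ring
  have hf : Measurable f := by fun_prop
  have hf₀ (z : ℝ) : 0 ≤ f z := by linarith [cos_le_one (r * z)]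
  have hsum (z : ℝ) : f z + f (z - δ) + f (z - 2 * δ) = 3 := by
    have h₁ : r * (z - δ) = r * z - 2 * π / 3 := by simp only [δ]; field_simp
    have h₂ : r * (z - 2 * δ) = r * z - 4 * π / 3 := by simp only [δ]; field_simp; ring
    have := cos_add_cos_sub_two_pi_div_three_add_cos_sub_four_pi_div_three (r * z)
    simp only [f, h₁, h₂]
    linarith
  have hint' {t : ℝ} (ht : 0 ≤ t) (hta : t ≤ a) :=
    integrableOn_Ioi_comp_sub_mul hν hν₀ hf hf₀ hint ht hta
  have hle {t : ℝ} (ht : 0 ≤ t) (hta : t ≤ a) :=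
    setIntegral_Ioi_comp_sub_mul_le hν hν₀ hf hf₀ hint ht hta
  have hint₀ := hint' le_rfl (by linarith)
  have hint₁ := hint' hδ (by linarith)
  have hint₂ := hint' (by linarith) h2δ
  simp only [sub_zero] at hint₀
  have hsplit : 3 * ∫ z in Ioi a, ν z = (∫ z in Ioi a, f z * ν z) +
      (∫ z in Ioi a, f (z - δ) * ν z) + ∫ z in Ioi a, f (z - 2 * δ) * ν z :=
    calc 3 * ∫ z in Ioi a, ν z
        = ∫ z in Ioi a, f z * ν z + f (z - δ) * ν z + f (z - 2 * δ) * ν z := by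
          rw [← integral_const_mul]
          congr 1 with z
          rw [← add_mul, ← add_mul, hsum]
      _ = _ := by
          have hint₀₁ : IntegrableOn (fun z ↦ f z * ν z + f (z - δ) * ν z) (Ioi a) :=
            hint₀.add hint₁
          rw [integral_add hint₀₁ hint₂, integral_add hint₀ hint₁]
  have h₀ := hle le_rfl (by linarith)
  simp only [sub_zero] at h₀
  linarith [hle hδ (by linarith), hle (by linarith) h2δ]

end Antitone

/-- Tail lower bound for the one-dimensional exponent of a unimodal jump part. -/
theorem stmt_4 (ν₁ : ℝ → ℝ)
    (hnonneg : ∀ z, 0 < z → 0 ≤ ν₁ z)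
    (hmono : ∀ z w : ℝ, 0 < z → z ≤ w → ν₁ w ≤ ν₁ z)
    (hint : IntegrableOn (fun z => min 1 (z ^ 2) * ν₁ z) (Ioi (0 : ℝ)))
    (ψ : ℝ → ℝ)
    (hψ : ∀ r, ψ r = 2 * ∫ z in Ioi (0 : ℝ), (1 - Real.cos (r * z)) * ν₁ z) :
    ∀ r : ℝ, 0 < r →
      (2 / 3) * ∫ z in Ioi (5 * π / (3 * r)), ν₁ z ≤ ψ r := by
  intro r hr
  have hν : AntitoneOn ν₁ (Ioi 0) := fun z hz w _ hzw ↦ hmono z w hz hzw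
  have ha : 4 * π / (3 * r) ≤ 5 * π / (3 * r) := by gcongr; norm_num
  have htail := setIntegral_Ioi_le_setIntegral_one_sub_cos_mul hν hnonneg
    (integrableOn_one_sub_cos_mul hν hnonneg hint r) hr ha
  have htail₀ : 0 ≤ ∫ z in Ioi (5 * π / (3 * r)), ν₁ z :=
    setIntegral_nonneg measurableSet_Ioi fun z (hz : _ < z) ↦
      hnonneg z ((show 0 < 5 * π / (3 * r) by positivity).trans hz)
  rw [hψ r]
  linarith
end

section
/- Let ν₁ : (0,∞) → [0,∞) be non-increasing with ∫₀^∞ min(1, z²) ν₁(z) dz < ∞ and ψ̃₀(r) = 2∫₀^∞ (1 - cos(rz)) ν₁(z) dz. Then for every r > 0, ψ̃₀(r) ≥ (1/3)·∫₀^∞ min(1, (zr)²) ν₁(z) dz. -/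
open Real MeasureTheory Set Filter

/-!
The kernel `k(u) = (1 - cos u) - min(1, u²)/6` has nonnegative primitive:
`∫₀^v k = v - sin v - (1/6) ∫₀^v min(1, u²) ≥ 0`, by Taylor bounds on `sin` separately for
`v ≤ 1` and `v ≥ 1`. By scaling the same holds for `z ↦ k(rz)`. A non-increasing `ν₁ ≥ 0` is a
superposition of indicators, `ν₁(z) = ∫₀^∞ 1{s < ν₁ z} ds`, and each superlevel set
`{z > 0 | s < ν₁ z}` is `(0, t_s)` up to one point, or all of `(0, ∞)`. By Fubini,
`∫ k(rz) ν₁(z) dz = ∫₀^∞ ∫₀^{t_s} k(rz) dz ds ≥ 0`, i.e.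
`∫ (1 - cos(rz)) ν₁ ≥ (1/6) ∫ min(1, (rz)²) ν₁`, and `ψ̃₀ = 2 ∫ (1 - cos(rz)) ν₁`.
-/

lemma sin_le_sub_cube_div_eighteen {v : ℝ} (hv₀ : 0 ≤ v) (hv₁ : v ≤ 1) :
    sin v ≤ v - v ^ 3 / 18 := by
  have h := (abs_le.mp (sin_bound (x := v) (by rwa [abs_of_nonneg hv₀]))).2
  rw [abs_of_nonneg hv₀] at h
  nlinarith [pow_le_pow_of_le_one hv₀ hv₁ (show 3 ≤ 5 by norm_num), pow_nonneg hv₀ 3]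

lemma six_mul_sin_le {v : ℝ} (hv : 1 ≤ v) : 6 * sin v ≤ 5 * v + 2 / 3 := by
  rcases le_total v (3 / 2) with hv' | hv'
  · have hsin_one := (abs_le.mp (sin_bound (x := 1) (by norm_num))).2
    have hlip := (abs_le.mp (abs_sin_sub_sin_le v 1)).2
    rw [abs_of_nonneg (sub_nonneg.mpr hv)] at hlip
    linarith
  · linarith [sin_le_one v]

lemma integral_one_sub_cos (v : ℝ) : ∫ u in (0 : ℝ)..v, (1 - cos u) = v - sin v := by
  simp [intervalIntegral.integral_sub, integral_cos]

lemma integral_min_one_sq_le_six_mul {v : ℝ} (hv : 0 ≤ v) :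
    ∫ u in (0 : ℝ)..v, min 1 (u ^ 2) ≤ 6 * (v - sin v) := by
  have hii : ∀ a b : ℝ, IntervalIntegrable (fun u : ℝ => min 1 (u ^ 2)) volume a b :=
    fun a b => (by fun_prop : Continuous fun u : ℝ => min 1 (u ^ 2)).intervalIntegrable a b
  rcases le_total v 1 with hv₁ | hv₁
  · calc ∫ u in (0 : ℝ)..v, min 1 (u ^ 2) ≤ ∫ u in (0 : ℝ)..v, u ^ 2 :=
          intervalIntegral.integral_mono_on hv (hii 0 v)
            ((continuous_pow 2).intervalIntegrable 0 v) fun u _ => min_le_right _ _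
      _ = v ^ 3 / 3 := by norm_num [integral_pow]
      _ ≤ 6 * (v - sin v) := by linarith [sin_le_sub_cube_div_eighteen hv hv₁]
  · calc ∫ u in (0 : ℝ)..v, min 1 (u ^ 2)
          = (∫ u in (0 : ℝ)..1, min 1 (u ^ 2)) + ∫ u in (1 : ℝ)..v, min 1 (u ^ 2) :=
          (intervalIntegral.integral_add_adjacent_intervals (hii 0 1) (hii 1 v)).symm
      _ ≤ (∫ u in (0 : ℝ)..1, u ^ 2) + ∫ _ in (1 : ℝ)..v, (1 : ℝ) := by
          gcongr
          · exact intervalIntegral.integral_mono_on zero_le_one (hii 0 1)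
              ((continuous_pow 2).intervalIntegrable 0 1) fun u _ => min_le_right _ _
          · exact intervalIntegral.integral_mono_on hv₁ (hii 1 v) intervalIntegrable_const
              fun u _ => min_le_left _ _
      _ = v - 2 / 3 := by norm_num [integral_pow]; ring
      _ ≤ 6 * (v - sin v) := by linarith [six_mul_sin_le hv₁]

lemma integral_one_sub_cos_sub_min_nonneg {v : ℝ} (hv : 0 ≤ v) :
    0 ≤ ∫ u in (0 : ℝ)..v, ((1 - cos u) - min 1 (u ^ 2) / 6) := by
  rw [intervalIntegral.integral_sub
      ((by fun_prop : Continuous fun u : ℝ => 1 - cos u).intervalIntegrable _ _)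
      ((by fun_prop : Continuous fun u : ℝ => min 1 (u ^ 2) / 6).intervalIntegrable _ _),
    integral_one_sub_cos, intervalIntegral.integral_div]
  linarith [integral_min_one_sq_le_six_mul hv]

lemma integral_one_sub_cos_mul_sub_min_nonneg {r t : ℝ} (hr : 0 < r) (ht : 0 ≤ t) :
    0 ≤ ∫ z in (0 : ℝ)..t, ((1 - cos (r * z)) - min 1 ((r * z) ^ 2) / 6) := by
  rw [intervalIntegral.integral_comp_mul_left (fun u => (1 - cos u) - min 1 (u ^ 2) / 6) hr.ne',
    mul_zero]
  exact smul_nonneg (inv_nonneg.mpr hr.le) (integral_one_sub_cos_sub_min_nonneg (by positivity))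

lemma setIntegral_Ioi_nonneg_of_intervalIntegral_nonneg {h : ℝ → ℝ} {a : ℝ}
    (hpos : ∀ t, a ≤ t → 0 ≤ ∫ z in a..t, h z) : 0 ≤ ∫ z in Ioi a, h z := by
  by_cases hint : IntegrableOn h (Ioi a)
  · exact ge_of_tendsto (intervalIntegral_tendsto_integral_Ioi a hint tendsto_id)
      ((eventually_ge_atTop a).mono hpos)
  · rw [integral_undef hint]

lemma AntitoneOn.superlevelSet_cases {g : ℝ → ℝ} {a : ℝ} (hg : AntitoneOn g (Ioi a))
    (s : ℝ) :
    (∀ z ∈ Ioi a, s < g z) ∨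
      ∃ t, a ≤ t ∧ ∀ z ∈ Ioi a, z ≠ t → (s < g z ↔ z < t) := by
  by_cases hall : ∀ z ∈ Ioi a, s < g z
  · exact Or.inl hall
  push Not at hall
  obtain ⟨z₀, hz₀, hgz₀⟩ := hall
  -- inserting `a` makes `S` nonempty and forces `a ≤ sSup S`
  set S := insert a {z ∈ Ioi a | s < g z}
  have hS : BddAbove S := by
    refine ⟨max a z₀, ?_⟩
    rintro z (rfl | ⟨hz, hsz⟩)
    · exact le_max_left _ _
    · by_contra! hlt
      exact (hsz.trans_le (hg hz₀ hz ((le_max_right _ _).trans hlt.le))).not_ge hgz₀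
  refine Or.inr ⟨sSup S, le_csSup hS (mem_insert a _),
    fun z hz hzt => ⟨fun hsz => ?_, fun hzt' => ?_⟩⟩
  · exact (le_csSup hS (mem_insert_of_mem a ⟨hz, hsz⟩)).lt_of_ne hzt
  · obtain ⟨w, rfl | ⟨hw, hsw⟩, hzw⟩ := exists_lt_of_lt_csSup (insert_nonempty a _) hzt'
    · exact absurd hz hzw.not_gt
    · exact hsw.trans_le (hg hz hw hzw.le)

lemma integrableOn_Ioi_indicator_Iio (b c : ℝ) :
    IntegrableOn ((Iio b).indicator fun _ => c) (Ioi 0) := by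
  rw [IntegrableOn, integrable_indicator_iff measurableSet_Iio, IntegrableOn,
    Measure.restrict_restrict measurableSet_Iio, Iio_inter_Ioi]
  exact integrableOn_const measure_Ioo_lt_top.ne

lemma integral_Ioi_indicator_Iio (c : ℝ) {b : ℝ} (hb : 0 ≤ b) :
    ∫ s in Ioi 0, (Iio b).indicator (fun _ => c) s = c * b := by
  rw [integral_indicator measurableSet_Iio, Measure.restrict_restrict measurableSet_Iio,
    Iio_inter_Ioi, setIntegral_const, measureReal_def, Real.volume_Ioo, sub_zero,
    ENNReal.toReal_ofReal hb, smul_eq_mul, mul_comm]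

lemma measurable_indicator_Iio :
    Measurable fun q : ℝ × ℝ × ℝ => (Iio q.2.1).indicator (fun _ => q.1) q.2.2 :=
  Measurable.ite (measurableSet_lt measurable_snd.snd measurable_snd.fst) measurable_fst
    measurable_const

lemma integrable_indicator_Iio_prod {α : Type*} [MeasurableSpace α] {μ : Measure α} [SFinite μ]
    {g h : α → ℝ} (hgm : AEMeasurable g μ) (hg₀ : 0 ≤ᵐ[μ] g) (hh : Measurable h)
    (hhg : Integrable (fun z => h z * g z) μ) :
    Integrable (fun p : α × ℝ => (Iio (g p.1)).indicator (fun _ => h p.1) p.2)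
      (μ.prod (volume.restrict (Ioi 0))) := by
  have hmeas : AEStronglyMeasurable
      (fun p : α × ℝ => (Iio (g p.1)).indicator (fun _ => h p.1) p.2)
      (μ.prod (volume.restrict (Ioi 0))) :=
    (measurable_indicator_Iio.comp_aemeasurable ((hh.comp measurable_fst).aemeasurable.prodMk
      ((hgm.comp_quasiMeasurePreserving Measure.quasiMeasurePreserving_fst).prodMk
        measurable_snd.aemeasurable))).aestronglyMeasurable
  refine (integrable_prod_iff hmeas).2 ⟨Eventually.of_forall fun z =>
    integrableOn_Ioi_indicator_Iio (g z) (h z), hhg.norm.congr ?_⟩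
  filter_upwards [hg₀] with z hz
  simp_rw [norm_indicator_eq_indicator_norm]
  rw [integral_Ioi_indicator_Iio _ hz, norm_mul, Real.norm_of_nonneg hz]

lemma setIntegral_indicator_superlevelSet_nonneg {g h : ℝ → ℝ} {a : ℝ}
    (hg : AntitoneOn g (Ioi a)) (hpos : ∀ t, a ≤ t → 0 ≤ ∫ z in a..t, h z) (s : ℝ) :
    0 ≤ ∫ z in Ioi a, (Iio (g z)).indicator (fun _ => h z) s := by
  rcases hg.superlevelSet_cases s with hall | ⟨t, hat, ht⟩
  · rw [setIntegral_congr_fun measurableSet_Ioi fun z hz =>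
      indicator_of_mem (mem_Iio.mpr (hall z hz)) _]
    exact setIntegral_Ioi_nonneg_of_intervalIntegral_nonneg hpos
  have hae : (fun z => (Iio (g z)).indicator (fun _ => h z) s)
      =ᵐ[volume.restrict (Ioi a)] (Iio t).indicator h := by
    filter_upwards [ae_restrict_mem measurableSet_Ioi, (volume.restrict (Ioi a)).ae_ne t]
      with z hz hzt
    by_cases hsz : s < g z
    · rw [indicator_of_mem (mem_Iio.mpr hsz),
        indicator_of_mem (mem_Iio.mpr ((ht z hz hzt).1 hsz))]
    · rw [indicator_of_notMem (mt mem_Iio.mp hsz),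
        indicator_of_notMem (s := Iio t) fun hzt' => hsz ((ht z hz hzt).2 hzt')]
  rw [integral_congr_ae hae, integral_indicator measurableSet_Iio,
    Measure.restrict_restrict measurableSet_Iio, Iio_inter_Ioi, ← integral_Ioc_eq_integral_Ioo,
    ← intervalIntegral.integral_of_le hat]
  exact hpos t hat

theorem setIntegral_mul_nonneg_of_antitoneOn {g h : ℝ → ℝ} {a : ℝ}
    (hg : AntitoneOn g (Ioi a)) (hg₀ : ∀ z ∈ Ioi a, 0 ≤ g z) (hh : Measurable h)
    (hhg : IntegrableOn (fun z => h z * g z) (Ioi a))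
    (hpos : ∀ t, a ≤ t → 0 ≤ ∫ z in a..t, h z) :
    0 ≤ ∫ z in Ioi a, h z * g z := by
  have hF := integrable_indicator_Iio_prod
    (aemeasurable_restrict_of_antitoneOn measurableSet_Ioi hg)
    ((ae_restrict_mem measurableSet_Ioi).mono hg₀) hh hhg
  calc 0 ≤ ∫ s in Ioi 0, ∫ z in Ioi a, (Iio (g z)).indicator (fun _ => h z) s :=
        integral_nonneg fun s => setIntegral_indicator_superlevelSet_nonneg hg hpos s
    _ = ∫ z in Ioi a, ∫ s in Ioi 0, (Iio (g z)).indicator (fun _ => h z) s :=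
        (integral_integral_swap hF).symm
    _ = ∫ z in Ioi a, h z * g z :=
        setIntegral_congr_fun measurableSet_Ioi fun z hz =>
          integral_Ioi_indicator_Iio _ (hg₀ z hz)

lemma one_sub_cos_le_two_mul_min (u : ℝ) : 1 - cos u ≤ 2 * min 1 (u ^ 2) := by
  rcases le_total (u ^ 2) 1 with hu | hu
  · rw [min_eq_right hu]
    nlinarith [one_sub_sq_div_two_le_cos (x := u), sq_nonneg u]
  · rw [min_eq_left hu]
    linarith [neg_one_le_cos u]

lemma min_one_mul_sq_le (r z : ℝ) : min 1 ((r * z) ^ 2) ≤ max 1 (r ^ 2) * min 1 (z ^ 2) := by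
  rcases le_total (z ^ 2) 1 with hz | hz
  · rw [min_eq_right hz, mul_pow]
    exact (min_le_right _ _).trans (mul_le_mul_of_nonneg_right (le_max_right _ _) (sq_nonneg z))
  · rw [min_eq_left hz, mul_one]
    exact (min_le_left _ _).trans (le_max_left _ _)

lemma MeasureTheory.Integrable.mul_of_abs_le_mul {α : Type*} [MeasurableSpace α] {μ : Measure α}
    {f m g : α → ℝ} {C : ℝ} (hm : Integrable (fun x => m x * g x) μ) (hf : Measurable f)
    (hg : AEMeasurable g μ) (hg₀ : 0 ≤ᵐ[μ] g) (hfm : ∀ x, |f x| ≤ C * m x) :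
    Integrable (fun x => f x * g x) μ := by
  refine (hm.const_mul C).mono' (hf.aestronglyMeasurable.mul hg.aestronglyMeasurable) ?_
  filter_upwards [hg₀] with x hx
  rw [norm_mul, Real.norm_eq_abs, Real.norm_of_nonneg hx, ← mul_assoc]
  exact mul_le_mul_of_nonneg_right (hfm x) hx

/-- Lower bound for the one-dimensional exponent by the truncated second moment. -/
theorem stmt_5 (ν₁ : ℝ → ℝ)
    (hnonneg : ∀ z, 0 < z → 0 ≤ ν₁ z)
    (hmono : ∀ z w : ℝ, 0 < z → z ≤ w → ν₁ w ≤ ν₁ z)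
    (hint : IntegrableOn (fun z => min 1 (z ^ 2) * ν₁ z) (Ioi (0 : ℝ)))
    (ψ : ℝ → ℝ)
    (hψ : ∀ r, ψ r = 2 * ∫ z in Ioi (0 : ℝ), (1 - Real.cos (r * z)) * ν₁ z) :
    ∀ r : ℝ, 0 < r →
      (1 / 3) * ∫ z in Ioi (0 : ℝ), min 1 ((z * r) ^ 2) * ν₁ z ≤ ψ r := by
  intro r hr
  simp_rw [hψ r, mul_comm _ r]
  have hanti : AntitoneOn ν₁ (Ioi 0) := fun z hz w _ hzw => hmono z w hz hzw
  have hν_meas : AEMeasurable ν₁ (volume.restrict (Ioi 0)) :=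
    aemeasurable_restrict_of_antitoneOn measurableSet_Ioi hanti
  have hν₀ : 0 ≤ᵐ[volume.restrict (Ioi 0)] ν₁ :=
    (ae_restrict_mem measurableSet_Ioi).mono hnonneg
  have hmin : IntegrableOn (fun z => min 1 ((r * z) ^ 2) * ν₁ z) (Ioi 0) :=
    Integrable.mul_of_abs_le_mul hint (by fun_prop) hν_meas hν₀ fun z => by
      rw [abs_of_nonneg (by positivity)]
      exact min_one_mul_sq_le r z
  have hcos : IntegrableOn (fun z => (1 - cos (r * z)) * ν₁ z) (Ioi 0) :=
    Integrable.mul_of_abs_le_mul hint (C := 2 * max 1 (r ^ 2)) (by fun_prop) hν_meas hν₀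
      fun z => by
        rw [abs_of_nonneg (by linarith [cos_le_one (r * z)]), mul_assoc]
        exact (one_sub_cos_le_two_mul_min _).trans (by linarith [min_one_mul_sq_le r z])
  have key : 0 ≤ ∫ z in Ioi 0, ((1 - cos (r * z)) - min 1 ((r * z) ^ 2) / 6) * ν₁ z :=
    setIntegral_mul_nonneg_of_antitoneOn hanti hnonneg (by fun_prop)
      ((hcos.sub (hmin.div_const 6)).congr_fun (fun z _ => by simp only [Pi.sub_apply]; ring)
        measurableSet_Ioi)
      fun t ht => integral_one_sub_cos_mul_sub_min_nonneg hr ht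
  have hsplit : ∫ z in Ioi 0, ((1 - cos (r * z)) - min 1 ((r * z) ^ 2) / 6) * ν₁ z
      = (∫ z in Ioi 0, (1 - cos (r * z)) * ν₁ z)
        - (∫ z in Ioi 0, min 1 ((r * z) ^ 2) * ν₁ z) / 6 := by
    rw [← integral_div, ← integral_sub hcos (hmin.div_const 6)]
    congr 1 with z
    ring
  linarith
end

section
/- Let ψ(x) = ⟨x, Ax⟩ + ∫(1 - cos⟨x,z⟩)ν(dz) be the characteristic exponent of a symmetric Lévy process with Gaussian matrix A and Lévy measure ν, and let ψ*(r) = sup_{|x| ≤ r} ψ(x). Then for all r ≥ 0: (1/(8(1+2d)))·(‖A‖r² + ∫min(1, (r|z|)²)ν(dz)) ≤ ψ*(r) ≤ 2·(‖A‖r² + ∫min(1, (r|z|)²)ν(dz)). -/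
/-!
Upper bound: for `‖x‖ ≤ r` one has `⟪x, A x⟫ ≤ ‖A‖ r²` and
`1 - cos ⟪x, z⟫ ≤ 2 min(1, (r‖z‖)²)`.

Lower bound: both parts of `ψ` are non-negative, so each is at most `ψ*(r)`. For the Gaussian
part, `‖A‖` is the supremum of the Rayleigh quotient of the positive symmetric operator `A`. For
the jump part, average `ψ` along the segment `t r eⱼ`, `0 < t ≤ 1`: by Fubini (a Lévy measure is
σ-finite) and `∫₀¹ (1 - cos (t c)) dt ≥ min(1, c²)/16`, this bounds
`∫ min(1, (r zⱼ)²) ν(dz)` by `16 ψ*(r)`, and `min(1, (r‖z‖)²) ≤ ∑ⱼ min(1, (r zⱼ)²)`.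
Altogether `‖A‖ r² + ∫ min(1, (r‖z‖)²) ν(dz) ≤ (1 + 16 d) ψ*(r)`.
-/

open MeasureTheory Set
open scoped RealInnerProductSpace

lemma one_sub_cos_le_two_mul_min_one_sq {a b : ℝ} (hab : |a| ≤ b) :
    1 - Real.cos a ≤ 2 * min 1 (b ^ 2) := by
  have hsq : a ^ 2 ≤ b ^ 2 := by
    simpa only [sq_abs] using pow_le_pow_left₀ (abs_nonneg a) hab 2
  rw [mul_min_of_nonneg _ _ zero_le_two]
  exact le_min (by linarith [Real.neg_one_le_cos a])
    (by linarith [Real.one_sub_sq_div_two_le_cos (x := a), sq_nonneg b])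

lemma min_one_sq_div_sixteen_le_integral_one_sub_cos (c : ℝ) :
    min 1 (c ^ 2) / 16 ≤ ∫ t in (0 : ℝ)..1, (1 - Real.cos (t * c)) := by
  rcases le_or_gt |c| Real.pi with hc | hc
  · have hpt : ∀ t ∈ Icc (0 : ℝ) 1, 2 / Real.pi ^ 2 * c ^ 2 * t ^ 2 ≤ 1 - Real.cos (t * c) := by
      intro t ⟨ht0, ht1⟩
      have htc : |t * c| ≤ Real.pi := by
        rw [abs_mul, abs_of_nonneg ht0]; nlinarith [abs_nonneg c]
      linarith [Real.cos_le_one_sub_mul_cos_sq htc, show (t * c) ^ 2 = c ^ 2 * t ^ 2 by ring]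
    have hπ : Real.pi ^ 2 < 10 := by nlinarith [Real.pi_lt_d2, Real.pi_pos]
    calc min 1 (c ^ 2) / 16 ≤ c ^ 2 / 16 := by gcongr; exact min_le_right _ _
      _ ≤ 2 / Real.pi ^ 2 * c ^ 2 / 3 := by
        rw [div_mul_eq_mul_div, div_div, div_le_div_iff₀ (by norm_num) (by positivity)]
        nlinarith [sq_nonneg c]
      _ = ∫ t in (0 : ℝ)..1, 2 / Real.pi ^ 2 * c ^ 2 * t ^ 2 := by
        simp only [intervalIntegral.integral_const_mul, integral_pow]; ring
      _ ≤ ∫ t in (0 : ℝ)..1, (1 - Real.cos (t * c)) :=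
        intervalIntegral.integral_mono_on (μ := volume) zero_le_one
          (Continuous.intervalIntegrable (by fun_prop) _ _)
          (Continuous.intervalIntegrable (by fun_prop) _ _) hpt
  · have hc0 : c ≠ 0 := abs_pos.1 (Real.pi_pos.trans hc)
    have hsinc : Real.sin c / c ≤ 1 / Real.pi :=
      calc Real.sin c / c ≤ |Real.sin c| / |c| := abs_div (Real.sin c) c ▸ le_abs_self _
        _ ≤ 1 / Real.pi := div_le_div₀ zero_le_one (Real.abs_sin_le_one c) Real.pi_pos hc.le
    have hπ : 1 / Real.pi ≤ 15 / 16 := by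
      rw [div_le_div_iff₀ Real.pi_pos (by norm_num)]; linarith [Real.pi_gt_three]
    calc min 1 (c ^ 2) / 16 ≤ 1 - Real.sin c / c := by linarith [min_le_left 1 (c ^ 2)]
      _ = ∫ t in (0 : ℝ)..1, (1 - Real.cos (t * c)) := by
        rw [intervalIntegral.integral_sub intervalIntegrable_const
          (Continuous.intervalIntegrable (by fun_prop) _ _),
          intervalIntegral.integral_comp_mul_right Real.cos hc0]
        simp [integral_cos, div_eq_inv_mul]

lemma min_one_sum_le_sum_min_one {ι : Type*} (s : Finset ι) (f : ι → ℝ)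
    (hf : ∀ i ∈ s, 0 ≤ f i) :
    min 1 (∑ i ∈ s, f i) ≤ ∑ i ∈ s, min 1 (f i) :=
  Finset.le_sum_of_subadditive_on_pred (min 1) (0 ≤ ·) (by simp)
    (fun x y hx hy => by simp only [min_def]; split_ifs <;> linarith)
    (fun _ _ => add_nonneg) f hf

lemma min_one_mul_le_max_mul_min_one {c x : ℝ} (hx : 0 ≤ x) :
    min 1 (c * x) ≤ max 1 c * min 1 x := by
  simp only [min_def, max_def]; split_ifs <;> nlinarith

lemma inner_apply_self_le_opNorm_mul_sq {E : Type*} [NormedAddCommGroup E]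
    [InnerProductSpace ℝ E] (A : E →L[ℝ] E) {x : E} {r : ℝ} (hx : ‖x‖ ≤ r) :
    ⟪x, A x⟫ ≤ ‖A‖ * r ^ 2 :=
  calc ⟪x, A x⟫ ≤ ‖x‖ * ‖A x‖ := real_inner_le_norm _ _
    _ ≤ ‖x‖ * (‖A‖ * ‖x‖) := by gcongr; exact A.le_opNorm x
    _ = ‖A‖ * ‖x‖ ^ 2 := by ring
    _ ≤ ‖A‖ * r ^ 2 := by gcongr

lemma opNorm_mul_sq_le_of_inner_self_le {E : Type*} [NormedAddCommGroup E]
    [InnerProductSpace ℝ E] {A : E →L[ℝ] E} (hAsymm : ∀ x y, ⟪A x, y⟫ = ⟪x, A y⟫)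
    (hApos : ∀ x, 0 ≤ ⟪x, A x⟫) {r M : ℝ} (hr : 0 ≤ r) (hM : 0 ≤ M)
    (hle : ∀ x, ‖x‖ ≤ r → ⟪x, A x⟫ ≤ M) : ‖A‖ * r ^ 2 ≤ M := by
  rcases hr.eq_or_lt with rfl | hr
  · simpa using hM
  suffices ‖A‖ ≤ M / r ^ 2 by rwa [le_div_iff₀ (by positivity)] at this
  rw [A.norm_eq_iSup_rayleighQuotient hAsymm]
  refine ciSup_le fun x => ?_
  rcases eq_or_ne x 0 with rfl | hx
  · simpa using div_nonneg hM (sq_nonneg r)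
  set y := (r / ‖x‖) • x
  have hy : ‖y‖ = r := by
    rw [norm_smul, Real.norm_of_nonneg (by positivity), div_mul_cancel₀ _ (norm_ne_zero_iff.2 hx)]
  rw [← A.rayleigh_smul x (c := r / ‖x‖) (by positivity), ContinuousLinearMap.rayleighQuotient,
    ContinuousLinearMap.reApplyInnerSelf_apply, RCLike.re_to_real, hy, real_inner_comm,
    abs_of_nonneg (by have := hApos y; positivity)]
  gcongr
  exact hle y hy.le

lemma sigmaFinite_of_integrable_of_ae_pos {α : Type*} [MeasurableSpace α] {μ : Measure α}
    {f : α → ℝ} (hf : Integrable f μ) (hpos : ∀ᵐ x ∂μ, 0 < f x) : SigmaFinite μ := by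
  refine Measure.sigmaFinite_of_countable
    (S := insert {x | f x ≤ 0} (range fun n : ℕ => {x | 1 / (n + 1 : ℝ) ≤ f x}))
    ((countable_range _).insert _) ?_ ?_
  · rintro s (rfl | ⟨n, rfl⟩)
    · simpa only [not_lt] using (ae_iff.1 hpos).trans_lt ENNReal.zero_lt_top
    · exact hf.measure_ge_lt_top (by positivity)
  · refine eq_univ_of_forall fun x => ?_
    rcases le_or_gt (f x) 0 with hx | hx
    · exact ⟨_, mem_insert _ _, hx⟩
    · obtain ⟨n, hn⟩ := exists_nat_one_div_lt hx
      exact ⟨_, mem_insert_of_mem _ ⟨n, rfl⟩, hn.le⟩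

lemma integrable_min_one_mul_norm_sq {E : Type*} [NormedAddCommGroup E] [MeasurableSpace E]
    [OpensMeasurableSpace E] {ν : Measure E} (hint : Integrable (fun z => min 1 (‖z‖ ^ 2)) ν)
    (r : ℝ) : Integrable (fun z => min 1 ((r * ‖z‖) ^ 2)) ν := by
  refine (hint.const_mul (max 1 (r ^ 2))).mono' (by fun_prop) (ae_of_all _ fun z => ?_)
  rw [Real.norm_of_nonneg (by positivity), mul_pow]
  exact min_one_mul_le_max_mul_min_one (by positivity)

lemma integral_one_sub_cos_inner_le {E : Type*} [NormedAddCommGroup E] [InnerProductSpace ℝ E]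
    [MeasurableSpace E] {ν : Measure E} {r : ℝ}
    (hint : Integrable (fun z => min 1 ((r * ‖z‖) ^ 2)) ν) {x : E} (hx : ‖x‖ ≤ r) :
    ∫ z, (1 - Real.cos ⟪x, z⟫) ∂ν ≤ 2 * ∫ z, min 1 ((r * ‖z‖) ^ 2) ∂ν := by
  rw [← integral_const_mul]
  refine integral_mono_of_nonneg (ae_of_all _ fun z => sub_nonneg.2 (Real.cos_le_one _))
    (hint.const_mul 2) (ae_of_all _ fun z => one_sub_cos_le_two_mul_min_one_sq ?_)
  exact (abs_real_inner_le_norm x z).trans (by gcongr)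

lemma integral_min_one_sq_le_of_integral_one_sub_cos_le {X : Type*} [MeasurableSpace X]
    {ν : Measure X} [SFinite ν] {f : X → ℝ} (hf : Measurable f)
    (hint : Integrable (fun z => min 1 (f z ^ 2)) ν) {M : ℝ}
    (hle : ∀ t ∈ Ioc (0 : ℝ) 1, ∫ z, (1 - Real.cos (t * f z)) ∂ν ≤ M) :
    ∫ z, min 1 (f z ^ 2) ∂ν ≤ 16 * M := by
  let μ : Measure ℝ := volume.restrict (Ioc 0 1)
  have : IsProbabilityMeasure μ := ⟨by simp [μ]⟩
  have hμ : ∀ᵐ t ∂μ, t ∈ Ioc (0 : ℝ) 1 := ae_restrict_mem measurableSet_Ioc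
  have hF : Integrable (fun p : ℝ × X => 1 - Real.cos (p.1 * f p.2)) (μ.prod ν) := by
    refine ((integrable_const (1 : ℝ)).mul_prod (hint.const_mul 2)).mono'
      (by fun_prop) ?_
    filter_upwards [Measure.quasiMeasurePreserving_fst.ae hμ] with p ⟨hp0, hp1⟩
    rw [Real.norm_of_nonneg (by linarith [Real.cos_le_one (p.1 * f p.2)]), one_mul]
    have : |p.1 * f p.2| ≤ |f p.2| := by
      rw [abs_mul, abs_of_pos hp0]; exact mul_le_of_le_one_left (abs_nonneg _) hp1
    simpa only [sq_abs] using one_sub_cos_le_two_mul_min_one_sq this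
  calc ∫ z, min 1 (f z ^ 2) ∂ν
      ≤ ∫ z, 16 * ∫ t, (1 - Real.cos (t * f z)) ∂μ ∂ν := by
        refine integral_mono hint (hF.integral_prod_right.const_mul 16) fun z => ?_
        have := min_one_sq_div_sixteen_le_integral_one_sub_cos (f z)
        rw [intervalIntegral.integral_of_le zero_le_one] at this
        dsimp only; linarith
    _ = 16 * ∫ t, ∫ z, (1 - Real.cos (t * f z)) ∂ν ∂μ := by
        rw [integral_const_mul,
          ← integral_integral_swap (f := fun t z => 1 - Real.cos (t * f z)) hF]
    _ ≤ 16 * ∫ _, M ∂μ := by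
        refine mul_le_mul_of_nonneg_left ?_ (by norm_num)
        exact integral_mono_ae hF.integral_prod_left (integrable_const M)
          (hμ.mono fun t ht => hle t ht)
    _ = 16 * M := by simp

lemma integral_min_one_mul_norm_sq_le {d : ℕ} {ν : Measure (EuclideanSpace ℝ (Fin d))}
    [SFinite ν] (hint : Integrable (fun z => min 1 (‖z‖ ^ 2)) ν) {r M : ℝ} (hr : 0 ≤ r)
    (hle : ∀ x : EuclideanSpace ℝ (Fin d), ‖x‖ ≤ r → ∫ z, (1 - Real.cos ⟪x, z⟫) ∂ν ≤ M) :
    ∫ z, min 1 ((r * ‖z‖) ^ 2) ∂ν ≤ 16 * d * M := by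
  have hcoord (j : Fin d) :
      Integrable (fun z : EuclideanSpace ℝ (Fin d) => min 1 ((r * z j) ^ 2)) ν := by
    refine (integrable_min_one_mul_norm_sq hint r).mono' (by fun_prop) (ae_of_all _ fun z => ?_)
    rw [Real.norm_of_nonneg (by positivity), ← sq_abs, abs_mul, abs_of_nonneg hr]
    gcongr
    simpa only [Real.norm_eq_abs] using PiLp.norm_apply_le z j
  have hj (j : Fin d) : ∫ z, min 1 ((r * z j) ^ 2) ∂ν ≤ 16 * M := by
    refine integral_min_one_sq_le_of_integral_one_sub_cos_le (by fun_prop) (hcoord j)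
      fun t ⟨ht0, ht1⟩ => ?_
    have hx : ‖EuclideanSpace.single j (t * r)‖ ≤ r := by
      rw [PiLp.norm_single, Real.norm_of_nonneg (by positivity)]
      exact mul_le_of_le_one_left hr ht1
    simpa [EuclideanSpace.inner_single_left, mul_assoc] using hle _ hx
  calc ∫ z, min 1 ((r * ‖z‖) ^ 2) ∂ν
      ≤ ∫ z, ∑ j, min 1 ((r * z j) ^ 2) ∂ν := by
        refine integral_mono (integrable_min_one_mul_norm_sq hint r)
          (integrable_finsetSum _ fun j _ => hcoord j) fun z => ?_
        have hsum : (r * ‖z‖) ^ 2 = ∑ j, (r * z j) ^ 2 := by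
          simp only [mul_pow, PiLp.norm_sq_eq_of_L2, Real.norm_eq_abs, sq_abs, Finset.mul_sum]
        rw [hsum]
        exact min_one_sum_le_sum_min_one _ _ fun j _ => sq_nonneg _
    _ = ∑ j, ∫ z, min 1 ((r * z j) ^ 2) ∂ν := integral_finsetSum _ fun j _ => hcoord j
    _ ≤ ∑ _j : Fin d, 16 * M := Finset.sum_le_sum fun j _ => hj j
    _ = 16 * d * M := by
        rw [Finset.sum_const, Finset.card_univ, Fintype.card_fin, nsmul_eq_mul]; ring

/-- Two-sided bound for `ψ*(r)` in terms of `‖A‖ r² + ∫ min(1,(r|z|)²) ν(dz)`. -/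
theorem stmt_8 {d : ℕ}
    (A : EuclideanSpace ℝ (Fin d) →L[ℝ] EuclideanSpace ℝ (Fin d))
    (hAsymm : ∀ x y, ⟪A x, y⟫ = ⟪x, A y⟫)
    (hApos : ∀ x, 0 ≤ ⟪x, A x⟫)
    (ν : Measure (EuclideanSpace ℝ (Fin d)))
    (h0 : ν {0} = 0)
    (hint : Integrable (fun z => min 1 (‖z‖ ^ 2)) ν)
    (ψ : EuclideanSpace ℝ (Fin d) → ℝ)
    (hψ : ∀ x, ψ x = ⟪x, A x⟫ + ∫ z, (1 - Real.cos ⟪x, z⟫) ∂ν) :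
    ∀ r : ℝ, 0 ≤ r →
      (1 / (8 * (1 + 2 * (d : ℝ)))) *
          (‖A‖ * r ^ 2 + ∫ z, min 1 ((r * ‖z‖) ^ 2) ∂ν) ≤
        sSup (ψ '' {x | ‖x‖ ≤ r}) ∧
      sSup (ψ '' {x | ‖x‖ ≤ r}) ≤
        2 * (‖A‖ * r ^ 2 + ∫ z, min 1 ((r * ‖z‖) ^ 2) ∂ν) := by
  intro r hr
  have : SigmaFinite ν := sigmaFinite_of_integrable_of_ae_pos hint <| by
    filter_upwards [measure_eq_zero_iff_ae_notMem.1 h0] with z hz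
    exact lt_min one_pos (pow_pos (norm_pos_iff.2 hz) 2)
  set I := ∫ z, min 1 ((r * ‖z‖) ^ 2) ∂ν
  set M := sSup (ψ '' {x | ‖x‖ ≤ r})
  have hjump_nonneg (x) : 0 ≤ ∫ z, (1 - Real.cos ⟪x, z⟫) ∂ν :=
    integral_nonneg fun z => sub_nonneg.2 (Real.cos_le_one _)
  have hψ_le (x) (hx : ‖x‖ ≤ r) : ψ x ≤ ‖A‖ * r ^ 2 + 2 * I := by
    rw [hψ]
    exact add_le_add (inner_apply_self_le_opNorm_mul_sq A hx)
      (integral_one_sub_cos_inner_le (integrable_min_one_mul_norm_sq hint r) hx)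
  have hne : (ψ '' {x | ‖x‖ ≤ r}).Nonempty := ⟨ψ 0, 0, by simpa using hr, rfl⟩
  have hle_M (x) (hx : ‖x‖ ≤ r) : ψ x ≤ M :=
    le_csSup ⟨_, forall_mem_image.2 hψ_le⟩ (mem_image_of_mem ψ hx)
  have hM : 0 ≤ M := (hjump_nonneg 0).trans <| by simpa [hψ] using hle_M 0 (by simpa using hr)
  have hgauss : ‖A‖ * r ^ 2 ≤ M :=
    opNorm_mul_sq_le_of_inner_self_le hAsymm hApos hr hM fun x hx =>
      (le_add_of_nonneg_right (hjump_nonneg x)).trans (hψ x ▸ hle_M x hx)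
  have hjump : I ≤ 16 * d * M :=
    integral_min_one_mul_norm_sq_le hint hr fun x hx =>
      (le_add_of_nonneg_left (hApos x)).trans (hψ x ▸ hle_M x hx)
  have hI : 0 ≤ I := integral_nonneg fun z => by positivity
  refine ⟨?_, (csSup_le hne (forall_mem_image.2 hψ_le)).trans ?_⟩
  · rw [one_div_mul_eq_div, div_le_iff₀ (by positivity)]
    nlinarith
  · linarith [mul_nonneg (norm_nonneg A) (sq_nonneg r)]
end

section
/- Let ψ : ℝ^d → [0,∞) be a measurable function with ψ(x) > 0 for x ≠ 0 such that, for some C* ≥ 1, C*^{-1}·ψ*(|x|) ≤ ψ(x) ≤ ψ*(|x|) where ψ*(r) = sup_{|y| ≤ r}ψ(y), and ψ* satisfies the doubling-type scaling (1/2)(s²/(s²+1))ψ*(r) ≤ ψ*(sr) ≤ 2(1+s²)ψ*(r) for s,r > 0. Define F(λ) = ∫_{ℝ^d} e^{-|x|²/4} / ψ(√λ · x) dx for λ > 0. Then there exist constants c₁, c₂ > 0 depending only on d and C* such that c₁/ψ*(√λ) ≤ F(λ) ≤ c₂/ψ*(√λ) for all λ > 0. -/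
/-!
For `x ≠ 0` and `r = √λ`, comparability of `ψ` with `ψ*` and the two-sided scaling of `ψ*`
(applied with `s = ‖x‖`) sandwich the integrand pointwise:
`e^{-‖x‖²/4} / (2 (1 + ‖x‖²) ψ*(r)) ≤ e^{-‖x‖²/4} / ψ(r x) ≤ 2 C* (1 + ‖x‖⁻²) e^{-‖x‖²/4} / ψ*(r)`.
Both weights are integrable: in polar coordinates `‖x‖^s e^{-b‖x‖²}` is integrable on `ℝ^d`
as soon as `s > -d`, and the singular term has `s = -2 > -d` because `d ≥ 3`.
-/

open MeasureTheory Set Real Module Filter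

section RadialGaussian

variable {E : Type*} [NormedAddCommGroup E] [NormedSpace ℝ E] [FiniteDimensional ℝ E] [Nontrivial E]
  [MeasurableSpace E] [BorelSpace E] (μ : Measure E) [μ.IsAddHaarMeasure]

theorem integrable_norm_rpow_mul_exp_neg_mul_sq {b : ℝ} (hb : 0 < b) {s : ℝ}
    (hs : -(finrank ℝ E : ℝ) < s) :
    Integrable (fun x : E => ‖x‖ ^ s * exp (-b * ‖x‖ ^ 2)) μ := by
  have hdim : ((finrank ℝ E - 1 : ℕ) : ℝ) = finrank ℝ E - 1 := by
    rw [Nat.cast_sub finrank_pos, Nat.cast_one]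
  rw [integrable_fun_norm_addHaar μ (f := fun y => y ^ s * exp (-b * y ^ 2))]
  refine (integrableOn_rpow_mul_exp_neg_mul_sq hb (s := (finrank ℝ E - 1 : ℕ) + s)
    (by linarith)).congr_fun (fun y hy => ?_) measurableSet_Ioi
  dsimp only
  rw [smul_eq_mul, rpow_add hy, rpow_natCast, mul_assoc]

theorem integrable_exp_neg_norm_sq_div_four :
    Integrable (fun x : E => exp (-‖x‖ ^ 2 / 4)) μ := by
  refine (integrable_norm_rpow_mul_exp_neg_mul_sq μ (b := 1 / 4) (by norm_num) (s := 0)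
    (by simp [finrank_pos])).congr (Eventually.of_forall fun x => ?_)
  simp only [rpow_zero, one_mul]
  ring_nf

theorem integrable_inv_norm_sq_mul_exp_neg_norm_sq_div_four (hE : 2 < finrank ℝ E) :
    Integrable (fun x : E => (‖x‖ ^ 2)⁻¹ * exp (-‖x‖ ^ 2 / 4)) μ := by
  refine (integrable_norm_rpow_mul_exp_neg_mul_sq μ (b := 1 / 4) (by norm_num) (s := -2)
    (by norm_cast; omega)).congr (Eventually.of_forall fun x => ?_)
  simp only [rpow_neg (norm_nonneg x), rpow_two]
  ring_nf

theorem integrable_inv_two_mul_one_add_norm_sq_mul_exp :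
    Integrable (fun x : E => (2 * (1 + ‖x‖ ^ 2))⁻¹ * exp (-‖x‖ ^ 2 / 4)) μ := by
  refine (integrable_exp_neg_norm_sq_div_four μ).bdd_mul (c := 1)
    (Continuous.aestronglyMeasurable ?_) (Eventually.of_forall fun x => ?_)
  · exact (by fun_prop : Continuous fun x : E => 2 * (1 + ‖x‖ ^ 2)).inv₀ fun x => by positivity
  · rw [norm_inv, norm_of_nonneg (by positivity)]
    exact inv_le_one_of_one_le₀ (by nlinarith [sq_nonneg ‖x‖])

theorem integrable_two_mul_one_add_inv_norm_sq_mul_exp (hE : 2 < finrank ℝ E) :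
    Integrable (fun x : E => 2 * (1 + (‖x‖ ^ 2)⁻¹) * exp (-‖x‖ ^ 2 / 4)) μ := by
  refine (((integrable_exp_neg_norm_sq_div_four μ).add
    (integrable_inv_norm_sq_mul_exp_neg_norm_sq_div_four μ hE)).const_mul 2).congr
    (Eventually.of_forall fun x => ?_)
  simp only [Pi.add_apply]
  ring

end RadialGaussian

section Sandwich

variable {α : Type*} [MeasurableSpace α] {μ : Measure α}

theorem integral_pos_of_forall_pos [NeZero μ] {f : α → ℝ} (hf : Integrable f μ)
    (hpos : ∀ x, 0 < f x) : 0 < ∫ x, f x ∂μ := by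
  rw [integral_pos_iff_support_of_nonneg (fun x => (hpos x).le) hf,
    Function.support_eq_univ fun x => (hpos x).ne']
  exact NeZero.pos _

theorem integral_bounds_of_ae_bounds {f l u : α → ℝ} (hf : AEStronglyMeasurable f μ)
    (hl : Integrable l μ) (hu : Integrable u μ) (h : ∀ᵐ x ∂μ, l x ≤ f x ∧ f x ≤ u x) :
    ∫ x, l x ∂μ ≤ ∫ x, f x ∂μ ∧ ∫ x, f x ∂μ ≤ ∫ x, u x ∂μ := by
  have hfi := integrable_of_le_of_le hf (h.mono fun _ h => h.1) (h.mono fun _ h => h.2) hl hu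
  exact ⟨integral_mono_ae hl hfi (h.mono fun _ h => h.1),
    integral_mono_ae hfi hu (h.mono fun _ h => h.2)⟩

end Sandwich

theorem inv_bounds_of_scaling {a b s : ℝ} (hs : 0 < s) (hb : 0 < b)
    (hlow : 1 / 2 * (s ^ 2 / (s ^ 2 + 1)) * a ≤ b) (hup : b ≤ 2 * (1 + s ^ 2) * a) :
    (2 * (1 + s ^ 2))⁻¹ * a⁻¹ ≤ b⁻¹ ∧ b⁻¹ ≤ 2 * (1 + (s ^ 2)⁻¹) * a⁻¹ := by
  have ha : 0 < a := pos_of_mul_pos_right (hb.trans_le hup) (by positivity)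
  constructor
  · rw [← mul_inv]; exact inv_anti₀ hb hup
  · calc b⁻¹ ≤ (1 / 2 * (s ^ 2 / (s ^ 2 + 1)) * a)⁻¹ := inv_anti₀ (by positivity) hlow
      _ = 2 * (1 + (s ^ 2)⁻¹) * a⁻¹ := by field_simp

theorem inv_apply_smul_bounds {E : Type*} [NormedAddCommGroup E] [NormedSpace ℝ E]
    {ψ : E → ℝ} {ψstar : ℝ → ℝ} {C : ℝ} (hC : 0 < C) (hpos : ∀ x, x ≠ 0 → 0 < ψ x)
    (hcomp : ∀ x, C⁻¹ * ψstar ‖x‖ ≤ ψ x ∧ ψ x ≤ ψstar ‖x‖)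
    (hscale : ∀ s r : ℝ, 0 < s → 0 < r →
      (1 / 2) * (s ^ 2 / (s ^ 2 + 1)) * ψstar r ≤ ψstar (s * r) ∧
      ψstar (s * r) ≤ 2 * (1 + s ^ 2) * ψstar r)
    {r : ℝ} (hr : 0 < r) {x : E} (hx : x ≠ 0) :
    (2 * (1 + ‖x‖ ^ 2))⁻¹ * (ψstar r)⁻¹ ≤ (ψ (r • x))⁻¹ ∧
      (ψ (r • x))⁻¹ ≤ C * (2 * (1 + (‖x‖ ^ 2)⁻¹)) * (ψstar r)⁻¹ := by
  have hnorm : ‖r • x‖ = ‖x‖ * r := by rw [norm_smul, norm_of_nonneg hr.le, mul_comm]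
  have hψ : 0 < ψ (r • x) := hpos _ (smul_ne_zero hr.ne' hx)
  have hψstar : 0 < ψstar ‖r • x‖ := hψ.trans_le (hcomp _).2
  have hx' : 0 < ‖x‖ := norm_pos_iff.mpr hx
  obtain ⟨hlow, hup⟩ := hscale ‖x‖ r hx' hr
  rw [← hnorm] at hlow hup
  obtain ⟨hlow', hup'⟩ := inv_bounds_of_scaling hx' hψstar hlow hup
  constructor
  · exact hlow'.trans (inv_anti₀ hψ (hcomp _).2)
  · calc (ψ (r • x))⁻¹ ≤ (C⁻¹ * ψstar ‖r • x‖)⁻¹ := inv_anti₀ (by positivity) (hcomp _).1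
      _ = C * (ψstar ‖r • x‖)⁻¹ := by rw [mul_inv, inv_inv]
      _ ≤ C * (2 * (1 + (‖x‖ ^ 2)⁻¹) * (ψstar r)⁻¹) := by gcongr
      _ = _ := by ring

theorem stmt_12_general {d : ℕ} (hd : 3 ≤ d)
    (ψ : EuclideanSpace ℝ (Fin d) → ℝ)
    (hmeas : Measurable ψ)
    (hpos : ∀ x, x ≠ 0 → 0 < ψ x)
    (ψstar : ℝ → ℝ)
    (Cstar : ℝ) (hCstar : 1 ≤ Cstar)
    (hcomp : ∀ x, Cstar⁻¹ * ψstar ‖x‖ ≤ ψ x ∧ ψ x ≤ ψstar ‖x‖)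
    (hscale : ∀ s r : ℝ, 0 < s → 0 < r →
      (1 / 2) * (s ^ 2 / (s ^ 2 + 1)) * ψstar r ≤ ψstar (s * r) ∧
      ψstar (s * r) ≤ 2 * (1 + s ^ 2) * ψstar r)
    (F : ℝ → ℝ)
    (hF : ∀ lam : ℝ, 0 < lam →
      F lam = ∫ x : EuclideanSpace ℝ (Fin d),
        Real.exp (-‖x‖ ^ 2 / 4) / ψ (Real.sqrt lam • x)) :
    ∃ c₁ c₂ : ℝ, 0 < c₁ ∧ 0 < c₂ ∧ ∀ lam : ℝ, 0 < lam →
      c₁ / ψstar (Real.sqrt lam) ≤ F lam ∧ F lam ≤ c₂ / ψstar (Real.sqrt lam) := by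
  have hdim : finrank ℝ (EuclideanSpace ℝ (Fin d)) = d := finrank_euclideanSpace_fin
  have : Nontrivial (EuclideanSpace ℝ (Fin d)) := nontrivial_of_finrank_pos (R := ℝ) (by omega)
  have hC : 0 < Cstar := one_pos.trans_le hCstar
  have hw₁ := integrable_inv_two_mul_one_add_norm_sq_mul_exp
    (volume : Measure (EuclideanSpace ℝ (Fin d)))
  have hw₂ := integrable_two_mul_one_add_inv_norm_sq_mul_exp
    (volume : Measure (EuclideanSpace ℝ (Fin d))) (by rw [hdim]; omega)
  refine ⟨_, Cstar * _, integral_pos_of_forall_pos hw₁ fun x => by positivity,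
    mul_pos hC (integral_pos_of_forall_pos hw₂ fun x => by positivity), fun lam hlam => ?_⟩
  have hr : 0 < √lam := sqrt_pos.mpr hlam
  rw [hF lam hlam, div_eq_inv_mul, div_eq_inv_mul, ← integral_const_mul, ← integral_const_mul,
    ← integral_const_mul]
  refine integral_bounds_of_ae_bounds ((by fun_prop : Measurable fun x : EuclideanSpace ℝ (Fin d) =>
      exp (-‖x‖ ^ 2 / 4)).div (hmeas.comp (measurable_const_smul _))).aestronglyMeasurable
    (hw₁.const_mul _) ((hw₂.const_mul _).const_mul _) ?_
  filter_upwards [Measure.ae_ne volume 0] with x hx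
  obtain ⟨hlow, hup⟩ := inv_apply_smul_bounds hC hpos hcomp hscale hr hx
  rw [div_eq_inv_mul (exp _)]
  constructor
  · calc _ = (2 * (1 + ‖x‖ ^ 2))⁻¹ * (ψstar √lam)⁻¹ * exp (-‖x‖ ^ 2 / 4) := by ring
      _ ≤ _ := by gcongr
  · calc _ ≤ Cstar * (2 * (1 + (‖x‖ ^ 2)⁻¹)) * (ψstar √lam)⁻¹ * exp (-‖x‖ ^ 2 / 4) := by gcongr
      _ = _ := by ring

/-- Core Gaussian-integral computation in the Laplace transform estimate of the
potential of balls: `F(λ) ≍ 1/ψ*(√λ)`. -/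
theorem stmt_12 {d : ℕ} (hd : 3 ≤ d)
    (ψ : EuclideanSpace ℝ (Fin d) → ℝ)
    (hmeas : Measurable ψ)
    (hpos : ∀ x, x ≠ 0 → 0 < ψ x)
    (ψstar : ℝ → ℝ)
    (hψstar : ∀ r, ψstar r = sSup (ψ '' {x | ‖x‖ ≤ r}))
    (Cstar : ℝ) (hCstar : 1 ≤ Cstar)
    (hcomp : ∀ x, Cstar⁻¹ * ψstar ‖x‖ ≤ ψ x ∧ ψ x ≤ ψstar ‖x‖)
    (hscale : ∀ s r : ℝ, 0 < s → 0 < r →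
      (1 / 2) * (s ^ 2 / (s ^ 2 + 1)) * ψstar r ≤ ψstar (s * r) ∧
      ψstar (s * r) ≤ 2 * (1 + s ^ 2) * ψstar r)
    (F : ℝ → ℝ)
    (hF : ∀ lam : ℝ, 0 < lam →
      F lam = ∫ x : EuclideanSpace ℝ (Fin d),
        Real.exp (-‖x‖ ^ 2 / 4) / ψ (Real.sqrt lam • x)) :
    ∃ c₁ c₂ : ℝ, 0 < c₁ ∧ 0 < c₂ ∧ ∀ lam : ℝ, 0 < lam →
      c₁ / ψstar (Real.sqrt lam) ≤ F lam ∧ F lam ≤ c₂ / ψstar (Real.sqrt lam) :=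
  stmt_12_general hd ψ hmeas hpos ψstar Cstar hCstar hcomp hscale F hF
end

section
/- Let G : ℝ^d → [0,∞] be radially non-increasing and suppose g(r) := ∫_{B(0,r)}G(y)dy satisfies c₁/ψ*(1/r) ≤ g(r) ≤ c₂/ψ*(1/r) for r ≤ R, where ψ* : (0,∞) → (0,∞) satisfies WLSC(β, 1/R, C*) (ψ*(λu) ≥ C*λ^β ψ*(u) for λ ≥ 1, u ≥ 1/R). Then there exist b ∈ (0,1) and C₅ > 0, depending only on d, β, C*, c₁, c₂, such that G(x) ≥ C₅/(|x|^d·ψ*(1/|x|)) for 0 < |x| ≤ bR. -/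
/-!
Let `g(r) = ∫_{B(0,r)} G`. Since `G` is radially non-increasing, the annulus `B(0,κ|x|) \ B(0,|x|)`
contributes at most `G(x) |B(0,κ|x|)|`, so `G(x) |B(0,κ|x|)| ≥ g(κ|x|) - g(|x|)`. The two-sided bound on
`g` and the weak lower scaling of `ψ*` give `g(κ|x|) - g(|x|) ≥ (c₁ C* κ^β - c₂) / ψ*(1/|x|)`, which is
positive once `κ` is large; dividing by `|B(0,κ|x|)| = κ^d |x|^d |B(0,1)|` gives the bound for
`|x| ≤ R/κ`.
-/

open MeasureTheory Set Metric Filter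
open scoped ENNReal

def WLSC (ψ : ℝ → ℝ) (β θ C : ℝ) : Prop :=
  ∀ lam u : ℝ, 1 ≤ lam → θ ≤ u → C * lam ^ β * ψ u ≤ ψ (lam * u)

theorem WLSC.mul_rpow_mul_le {ψ : ℝ → ℝ} {β R C κ ρ : ℝ} (h : WLSC ψ β (1 / R) C)
    (hκ : 1 ≤ κ) (hρ : 0 < ρ) (hκρ : κ * ρ ≤ R) :
    C * κ ^ β * ψ (1 / (κ * ρ)) ≤ ψ (1 / ρ) := by
  have hκρ_pos : 0 < κ * ρ := by positivity
  have := h κ (1 / (κ * ρ)) hκ (one_div_le_one_div_of_le hκρ_pos hκρ)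
  rwa [show κ * (1 / (κ * ρ)) = 1 / ρ by field_simp] at this

theorem setLIntegral_ball_le_add_mul_measure_ball {E : Type*} [NormedAddCommGroup E]
    [MeasurableSpace E] (μ : Measure E) {G : E → ℝ≥0∞} {x : E}
    (hG : ∀ y, ‖x‖ ≤ ‖y‖ → G y ≤ G x) (s : ℝ) :
    ∫⁻ y in ball 0 s, G y ∂μ ≤ ∫⁻ y in ball 0 ‖x‖, G y ∂μ + G x * μ (ball 0 s) := by
  have h_annulus : ∫⁻ y in ball 0 s \ ball 0 ‖x‖, G y ∂μ ≤ G x * μ (ball 0 s) :=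
    calc ∫⁻ y in ball 0 s \ ball 0 ‖x‖, G y ∂μ
        ≤ ∫⁻ _ in ball 0 s \ ball 0 ‖x‖, G x ∂μ :=
          setLIntegral_mono measurable_const fun y hy ↦
            hG y (by simpa using hy.2)
      _ ≤ G x * μ (ball 0 s) := by
          rw [setLIntegral_const]
          exact mul_le_mul_right (measure_mono sdiff_subset) _
  calc ∫⁻ y in ball 0 s, G y ∂μ
      ≤ ∫⁻ y in ball 0 ‖x‖ ∪ (ball 0 s \ ball 0 ‖x‖), G y ∂μ :=
        lintegral_mono_set (by rw [union_sdiff_self]; exact subset_union_right)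
    _ ≤ ∫⁻ y in ball 0 ‖x‖, G y ∂μ + ∫⁻ y in ball 0 s \ ball 0 ‖x‖, G y ∂μ :=
        lintegral_union_le _ _ _
    _ ≤ _ := add_le_add le_rfl h_annulus

theorem ofReal_div_le_of_ofReal_le_mul_measure_ball {E : Type*} [NormedAddCommGroup E]
    [NormedSpace ℝ E] [MeasurableSpace E] [BorelSpace E] [FiniteDimensional ℝ E]
    (μ : Measure E) [μ.IsAddHaarMeasure] {a s : ℝ} {c : ℝ≥0∞} (hs : 0 < s)
    (h : ENNReal.ofReal a ≤ c * μ (ball 0 s)) :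
    ENNReal.ofReal (a / (s ^ Module.finrank ℝ E * μ.real (ball 0 1))) ≤ c := by
  have hunit : 0 < μ.real (ball (0 : E) 1) :=
    ENNReal.toReal_pos (measure_ball_pos μ 0 one_pos).ne' measure_ball_lt_top.ne
  rw [Measure.addHaar_ball_of_pos μ 0 hs, ← ofReal_measureReal measure_ball_lt_top.ne,
    ← ENNReal.ofReal_mul (by positivity)] at h
  rw [ENNReal.ofReal_div_of_pos (by positivity)]
  exact ENNReal.div_le_of_le_mul h

-- Used with `p = ψ*(1/‖x‖)`, `q = ψ*(1/s)`, `k = κ^β` and `s = κ‖x‖`.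
theorem ofReal_le_mul_measure_ball_of_bounds {E : Type*} [NormedAddCommGroup E]
    [MeasurableSpace E] (μ : Measure E) {G : E → ℝ≥0∞} {x : E}
    (hG : ∀ y, ‖x‖ ≤ ‖y‖ → G y ≤ G x) {c₁ c₂ C k p q s : ℝ} (hp : 0 < p) (hq : 0 < q)
    (hc₁ : 0 ≤ c₁) (hc₂ : 0 ≤ c₂) (hscale : C * k * q ≤ p)
    (hlower : ENNReal.ofReal (c₁ / q) ≤ ∫⁻ y in ball 0 s, G y ∂μ)
    (hupper : ∫⁻ y in ball 0 ‖x‖, G y ∂μ ≤ ENNReal.ofReal (c₂ / p)) :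
    ENNReal.ofReal ((c₁ * C * k - c₂) / p) ≤ G x * μ (ball 0 s) := by
  have hdiff : (c₁ * C * k - c₂) / p ≤ c₁ / q - c₂ / p := by
    rw [sub_div, sub_le_sub_iff_right, div_le_div_iff₀ hp hq]
    nlinarith [mul_le_mul_of_nonneg_left hscale hc₁]
  calc ENNReal.ofReal ((c₁ * C * k - c₂) / p)
      ≤ ENNReal.ofReal (c₁ / q - c₂ / p) := ENNReal.ofReal_le_ofReal hdiff
    _ = ENNReal.ofReal (c₁ / q) - ENNReal.ofReal (c₂ / p) := ENNReal.ofReal_sub _ (by positivity)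
    _ ≤ G x * μ (ball 0 s) := by
        rw [tsub_le_iff_left]
        exact hlower.trans
          ((setLIntegral_ball_le_add_mul_measure_ball μ hG s).trans (add_le_add hupper le_rfl))

theorem stmt_15_general {d : ℕ} (G : EuclideanSpace ℝ (Fin d) → ℝ≥0∞)
    (hradial : ∀ x y : EuclideanSpace ℝ (Fin d), ‖x‖ ≤ ‖y‖ → G y ≤ G x)
    (ψstar : ℝ → ℝ) (hψpos : ∀ r : ℝ, 0 < r → 0 < ψstar r)
    (R β Cstar c₁ c₂ : ℝ) (hβ : 0 < β) (hCstar : 0 < Cstar)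
    (hc₁ : 0 < c₁) (hc₂ : 0 < c₂)
    (hwlsc : ∀ lam u : ℝ, 1 ≤ lam → 1 / R ≤ u →
      Cstar * lam ^ β * ψstar u ≤ ψstar (lam * u))
    (hbound : ∀ r : ℝ, 0 < r → r ≤ R →
      ENNReal.ofReal (c₁ / ψstar (1 / r)) ≤
        (∫⁻ y in ball (0 : EuclideanSpace ℝ (Fin d)) r, G y) ∧
      (∫⁻ y in ball (0 : EuclideanSpace ℝ (Fin d)) r, G y) ≤
        ENNReal.ofReal (c₂ / ψstar (1 / r))) :
    ∃ b C₅ : ℝ, 0 < b ∧ b < 1 ∧ 0 < C₅ ∧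
      ∀ x : EuclideanSpace ℝ (Fin d), x ≠ 0 → ‖x‖ ≤ b * R →
        ENNReal.ofReal (C₅ / (‖x‖ ^ d * ψstar (1 / ‖x‖))) ≤ G x := by
  obtain ⟨κ, hκ, hκβ⟩ : ∃ κ : ℝ, 1 < κ ∧ c₂ / (c₁ * Cstar) < κ ^ β :=
    ((eventually_gt_atTop 1).and ((tendsto_rpow_atTop hβ).eventually_gt_atTop _)).exists
  have hA : 0 < c₁ * Cstar * κ ^ β - c₂ := by
    rw [div_lt_iff₀' (by positivity)] at hκβ
    linarith
  set V := volume.real (ball (0 : EuclideanSpace ℝ (Fin d)) 1) with hV_def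
  have hV : 0 < V := ENNReal.toReal_pos (measure_ball_pos _ _ one_pos).ne' measure_ball_lt_top.ne
  refine ⟨1 / κ, (c₁ * Cstar * κ ^ β - c₂) / (κ ^ d * V), by positivity,
    (div_lt_one (by positivity)).2 hκ, by positivity, fun x hx hxR ↦ ?_⟩
  have hr : 0 < ‖x‖ := norm_pos_iff.2 hx
  have hκr : κ * ‖x‖ ≤ R := by
    rw [one_div_mul_eq_div, le_div_iff₀ (by positivity)] at hxR
    linarith
  have hrR : ‖x‖ ≤ R := by nlinarith
  have hannulus := ofReal_le_mul_measure_ball_of_bounds volume (hradial x)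
    (hψpos _ (by positivity)) (hψpos _ (by positivity)) hc₁.le hc₂.le
    (WLSC.mul_rpow_mul_le hwlsc hκ.le hr hκr) (hbound _ (by positivity) hκr).1 (hbound _ hr hrR).2
  have hGx := ofReal_div_le_of_ofReal_le_mul_measure_ball volume (by positivity) hannulus
  rw [finrank_euclideanSpace_fin, ← hV_def] at hGx
  convert hGx using 2
  rw [mul_pow]
  field_simp

/-- Lower potential-kernel bound under the weak lower scaling condition:
`G(x) ≥ C₅/(|x|^d ψ*(1/|x|))` for `|x| ≤ bR`. -/
theorem stmt_15 {d : ℕ} (G : EuclideanSpace ℝ (Fin d) → ℝ≥0∞)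
    (hradial : ∀ x y : EuclideanSpace ℝ (Fin d), ‖x‖ ≤ ‖y‖ → G y ≤ G x)
    (ψstar : ℝ → ℝ) (hψpos : ∀ r : ℝ, 0 < r → 0 < ψstar r)
    (R β Cstar c₁ c₂ : ℝ) (hR : 0 < R) (hβ : 0 < β) (hCstar : 0 < Cstar)
    (hc₁ : 0 < c₁) (hc₂ : 0 < c₂)
    (hwlsc : ∀ lam u : ℝ, 1 ≤ lam → 1 / R ≤ u →
      Cstar * lam ^ β * ψstar u ≤ ψstar (lam * u))
    (hbound : ∀ r : ℝ, 0 < r → r ≤ R →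
      ENNReal.ofReal (c₁ / ψstar (1 / r)) ≤
        (∫⁻ y in ball (0 : EuclideanSpace ℝ (Fin d)) r, G y) ∧
      (∫⁻ y in ball (0 : EuclideanSpace ℝ (Fin d)) r, G y) ≤
        ENNReal.ofReal (c₂ / ψstar (1 / r))) :
    ∃ b C₅ : ℝ, 0 < b ∧ b < 1 ∧ 0 < C₅ ∧
      ∀ x : EuclideanSpace ℝ (Fin d), x ≠ 0 → ‖x‖ ≤ b * R →
        ENNReal.ofReal (C₅ / (‖x‖ ^ d * ψstar (1 / ‖x‖))) ≤ G x :=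
  stmt_15_general G hradial ψstar hψpos R β Cstar c₁ c₂ hβ hCstar hc₁ hc₂ hwlsc hbound
end

section
/- Let ν : ℝ^d → [0,∞) satisfy c₁^{-1}·f(|x|)/|x|^d ≤ ν(x) ≤ c₁·f(|x|)/|x|^d for all x ≠ 0, where f : (0,∞) → [0,∞) is non-increasing and satisfies f(λs) ≤ c₂λ^{-β}f(s) for all λ > 1, s > 0, with β > 0, c₂ ≥ 1. Define J(r) = ∫_{ℝ^d} min(1, (r|z|)²)·ν(z) dz for r > 0. Then J(λr) ≥ (c₁²c₂)^{-1}·λ^β·J(r) for all λ ≥ 1, r > 0 (provided J(r) < ∞), i.e. J satisfies the global weak lower scaling condition. -/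
open MeasureTheory Set
open scoped ENNReal

/-!
Substituting `z = w / λ` gives `λ^d J(λr) = ∫ min(1, (r|w|)²) ν(w/λ) dw`. The two-sided comparison
of `ν` with `f(|x|)/|x|^d` and the scaling `f(s/λ) ≥ c₂⁻¹ λ^β f(s)` give the pointwise bound
`ν(w/λ) ≥ (c₁² c₂)⁻¹ λ^(β + d) ν(w)`, and integrating it yields `J(λr) ≥ (c₁² c₂)⁻¹ λ^β J(r)`.
-/

section Dilation

variable {E : Type*} [NormedAddCommGroup E] [NormedSpace ℝ E] [MeasurableSpace E] [BorelSpace E]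
  [FiniteDimensional ℝ E] (μ : Measure E) [μ.IsAddHaarMeasure]

theorem lintegral_comp_inv_smul (g : E → ℝ≥0∞) {R : ℝ} (hR : R ≠ 0) :
    ∫⁻ x, g (R⁻¹ • x) ∂μ = ENNReal.ofReal |R ^ Module.finrank ℝ E| * ∫⁻ x, g x ∂μ := by
  calc ∫⁻ x, g (R⁻¹ • x) ∂μ = ∫⁻ x, g (MeasurableEquiv.smul₀ R⁻¹ (inv_ne_zero hR) x) ∂μ := rfl
    _ = ∫⁻ x, g x ∂μ.map (R⁻¹ • ·) := (lintegral_map_equiv g _).symm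
    _ = ENNReal.ofReal |R ^ Module.finrank ℝ E| * ∫⁻ x, g x ∂μ := by
      rw [Measure.map_addHaar_smul μ (inv_ne_zero hR), lintegral_smul_measure, inv_pow, inv_inv,
        smul_eq_mul]

noncomputable def truncatedMoment (ν : E → ℝ) (r : ℝ) : ℝ≥0∞ :=
  ∫⁻ z, ENNReal.ofReal (min 1 ((r * ‖z‖) ^ 2) * ν z) ∂μ

theorem ofReal_mul_truncatedMoment_le {ν : E → ℝ} {lam a : ℝ} (hlam : 0 < lam) (ha : 0 ≤ a)
    (hν : ∀ w, w ≠ 0 → lam ^ Module.finrank ℝ E * a * ν w ≤ ν (lam⁻¹ • w)) (r : ℝ) :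
    ENNReal.ofReal a * truncatedMoment μ ν r ≤ truncatedMoment μ ν (lam * r) := by
  set n := Module.finrank ℝ E
  have hlam_n : 0 < lam ^ n := pow_pos hlam n
  have hpointwise : ∀ w : E, lam ^ n * a * (min 1 ((r * ‖w‖) ^ 2) * ν w)
      ≤ min 1 ((lam * r * ‖lam⁻¹ • w‖) ^ 2) * ν (lam⁻¹ • w) := by
    intro w
    rw [norm_smul, Real.norm_of_nonneg (inv_nonneg.2 hlam.le),
      show lam * r * (lam⁻¹ * ‖w‖) = r * ‖w‖ by field_simp]
    rcases eq_or_ne w 0 with rfl | hw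
    · simp
    · rw [mul_left_comm]
      exact mul_le_mul_of_nonneg_left (hν w hw) (le_min zero_le_one (sq_nonneg _))
  rw [← ENNReal.mul_le_mul_iff_right (ENNReal.ofReal_pos.2 hlam_n).ne' ENNReal.ofReal_ne_top,
    truncatedMoment, truncatedMoment, ← mul_assoc, ← ENNReal.ofReal_mul hlam_n.le,
    ← lintegral_const_mul' _ _ ENNReal.ofReal_ne_top, ← abs_of_pos hlam_n,
    ← lintegral_comp_inv_smul μ _ hlam.ne', abs_of_pos hlam_n]
  refine lintegral_mono fun w => ?_
  rw [← ENNReal.ofReal_mul (by positivity)]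
  exact ENNReal.ofReal_le_ofReal (hpointwise w)

end Dilation

theorem rpow_mul_le_mul_inv_mul_of_scaling {f : ℝ → ℝ} {c β : ℝ} (hf0 : ∀ s, 0 < s → 0 ≤ f s)
    (hc : 1 ≤ c) (hscale : ∀ lam s : ℝ, 1 < lam → 0 < s → f (lam * s) ≤ c * lam ^ (-β) * f s)
    {lam s : ℝ} (hlam : 1 ≤ lam) (hs : 0 < s) :
    lam ^ β * f s ≤ c * f (lam⁻¹ * s) := by
  have hlam0 : 0 < lam := one_pos.trans_le hlam
  rcases hlam.eq_or_lt with rfl | hlam1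
  · simpa using mul_le_mul_of_nonneg_right hc (hf0 s hs)
  · have h := hscale lam (lam⁻¹ * s) hlam1 (by positivity)
    rw [mul_inv_cancel_left₀ hlam0.ne', Real.rpow_neg hlam0.le] at h
    calc lam ^ β * f s ≤ lam ^ β * (c * (lam ^ β)⁻¹ * f (lam⁻¹ * s)) :=
          mul_le_mul_of_nonneg_left h (by positivity)
      _ = c * f (lam⁻¹ * s) := by field_simp

theorem pow_mul_le_of_comparable_profile {E : Type*} [NormedAddCommGroup E] [NormedSpace ℝ E]
    {d : ℕ} {ν : E → ℝ} {f : ℝ → ℝ} {c₁ c₂ β lam : ℝ} (hc₁ : 0 < c₁) (hc₂ : 0 < c₂)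
    (hν : ∀ x : E, x ≠ 0 →
      c₁⁻¹ * (f ‖x‖ / ‖x‖ ^ d) ≤ ν x ∧ ν x ≤ c₁ * (f ‖x‖ / ‖x‖ ^ d))
    (hlam : 0 < lam) (hf : ∀ s, 0 < s → lam ^ β * f s ≤ c₂ * f (lam⁻¹ * s))
    {w : E} (hw : w ≠ 0) :
    lam ^ d * ((c₁ ^ 2 * c₂)⁻¹ * lam ^ β) * ν w ≤ ν (lam⁻¹ • w) := by
  have hs : 0 < ‖w‖ := norm_pos_iff.2 hw
  have hnorm : ‖lam⁻¹ • w‖ = lam⁻¹ * ‖w‖ := by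
    rw [norm_smul, Real.norm_of_nonneg (inv_nonneg.2 hlam.le)]
  have hlower := (hν (lam⁻¹ • w) (smul_ne_zero (inv_ne_zero hlam.ne') hw)).1
  rw [hnorm] at hlower
  calc lam ^ d * ((c₁ ^ 2 * c₂)⁻¹ * lam ^ β) * ν w
      ≤ lam ^ d * ((c₁ ^ 2 * c₂)⁻¹ * lam ^ β) * (c₁ * (f ‖w‖ / ‖w‖ ^ d)) :=
        mul_le_mul_of_nonneg_left (hν w hw).2 (by positivity)
    _ = (c₁ * c₂)⁻¹ * (lam ^ β * f ‖w‖) * (lam ^ d / ‖w‖ ^ d) := by field_simp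
    _ ≤ (c₁ * c₂)⁻¹ * (c₂ * f (lam⁻¹ * ‖w‖)) * (lam ^ d / ‖w‖ ^ d) := by
        gcongr _ * ?_ * _
        exact hf ‖w‖ hs
    _ = c₁⁻¹ * (f (lam⁻¹ * ‖w‖) / (lam⁻¹ * ‖w‖) ^ d) := by
        rw [mul_pow, inv_pow]
        field_simp
    _ ≤ ν (lam⁻¹ • w) := hlower

theorem stmt_17_general {d : ℕ} (ν : EuclideanSpace ℝ (Fin d) → ℝ)
    (f : ℝ → ℝ) (hf0 : ∀ s, 0 < s → 0 ≤ f s)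
    (c₁ c₂ β : ℝ) (hc₁ : 0 < c₁) (hc₂ : 1 ≤ c₂)
    (hν : ∀ x : EuclideanSpace ℝ (Fin d), x ≠ 0 →
      c₁⁻¹ * (f ‖x‖ / ‖x‖ ^ d) ≤ ν x ∧ ν x ≤ c₁ * (f ‖x‖ / ‖x‖ ^ d))
    (hfscale : ∀ lam s : ℝ, 1 < lam → 0 < s → f (lam * s) ≤ c₂ * lam ^ (-β) * f s)
    (J : ℝ → ℝ≥0∞)
    (hJ : ∀ r, J r = ∫⁻ z : EuclideanSpace ℝ (Fin d),
      ENNReal.ofReal (min 1 ((r * ‖z‖) ^ 2) * ν z)) :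
    ∀ lam r : ℝ, 1 ≤ lam → 0 < r → J r < ⊤ →
      ENNReal.ofReal ((c₁ ^ 2 * c₂)⁻¹ * lam ^ β) * J r ≤ J (lam * r) := by
  intro lam r hlam _ _
  obtain rfl : J = truncatedMoment volume ν := funext hJ
  have hlam0 : 0 < lam := one_pos.trans_le hlam
  refine ofReal_mul_truncatedMoment_le volume hlam0 (by positivity) (fun w hw => ?_) r
  rw [finrank_euclideanSpace_fin]
  exact pow_mul_le_of_comparable_profile hc₁ (one_pos.trans_le hc₂) hν hlam0
    (fun s hs => rpow_mul_le_mul_inv_mul_of_scaling hf0 hc₂ hfscale hlam hs) hw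

/-- Power-type lower scaling of the Lévy density profile implies global weak lower
scaling of `J(r) = ∫ min(1,(r|z|)²) ν(z) dz`. -/
theorem stmt_17 {d : ℕ} (ν : EuclideanSpace ℝ (Fin d) → ℝ)
    (f : ℝ → ℝ) (hf0 : ∀ s, 0 < s → 0 ≤ f s)
    (hfmono : ∀ s t : ℝ, 0 < s → s ≤ t → f t ≤ f s)
    (c₁ c₂ β : ℝ) (hc₁ : 0 < c₁) (hc₂ : 1 ≤ c₂) (hβ : 0 < β)
    (hν : ∀ x : EuclideanSpace ℝ (Fin d), x ≠ 0 →
      c₁⁻¹ * (f ‖x‖ / ‖x‖ ^ d) ≤ ν x ∧ ν x ≤ c₁ * (f ‖x‖ / ‖x‖ ^ d))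
    (hfscale : ∀ lam s : ℝ, 1 < lam → 0 < s → f (lam * s) ≤ c₂ * lam ^ (-β) * f s)
    (J : ℝ → ℝ≥0∞)
    (hJ : ∀ r, J r = ∫⁻ z : EuclideanSpace ℝ (Fin d),
      ENNReal.ofReal (min 1 ((r * ‖z‖) ^ 2) * ν z)) :
    ∀ lam r : ℝ, 1 ≤ lam → 0 < r → J r < ⊤ →
      ENNReal.ofReal ((c₁ ^ 2 * c₂)⁻¹ * lam ^ β) * J r ≤ J (lam * r) :=
  stmt_17_general ν f hf0 c₁ c₂ β hc₁ hc₂ hν hfscale J hJ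
end
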